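/- arXiv:1907.12424 — 13 statements merged into one kernel-verified Lean document; each statement's English description precedes it below -/
import Mathlib

section
/- Let X ∈ OB^{n,k}_+ (each column of X is a unit vector with nonnegative entries) and let V ∈ ℝ^{k×r} satisfy ‖V‖_F = 1 and (VV^T)_{ij} > 0 for all i,j ∈ [k]. Then ‖XV‖_F ≥ 1, with equality if and only if X^T X = I_k. -/
open Matrix Finset

/-- For `X` in the nonnegative oblique manifold and suitable `V`, `‖XV‖_F ≥ 1`
with equality iff `X` has orthonormal columns. -/
theorem stmt_1 (n k r : ℕ) (X : Matrix (Fin n) (Fin k) ℝ) (V : Matrix (Fin k) (Fin r) ℝ)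
    (hcol : ∀ j, ∑ i, (X i j) ^ 2 = 1) (hnonneg : ∀ i j, 0 ≤ X i j)
    (hV : Real.sqrt (∑ i, ∑ j, (V i j) ^ 2) = 1)
    (hVV : ∀ i j : Fin k, 0 < (V * Vᵀ) i j) :
    1 ≤ Real.sqrt (∑ i, ∑ j, ((X * V) i j) ^ 2) ∧
      (Real.sqrt (∑ i, ∑ j, ((X * V) i j) ^ 2) = 1 ↔ Xᵀ * X = 1) := by
  have hV2 : ∑ i, ∑ j, (V i j) ^ 2 = 1 := by
    have h0 : 0 ≤ ∑ i, ∑ j, (V i j) ^ 2 :=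
      Finset.sum_nonneg fun i _ => Finset.sum_nonneg fun j _ => sq_nonneg _
    nlinarith [Real.sq_sqrt h0, hV]
  -- key expansion via trace
  have key : (∑ i, ∑ j, ((X * V) i j) ^ 2)
      = ∑ a, ∑ b, (Xᵀ * X) a b * (V * Vᵀ) b a := by
    have t1 : (∑ i, ∑ j, ((X * V) i j) ^ 2)
        = Matrix.trace ((X * V)ᵀ * (X * V)) := by
      rw [Finset.sum_comm]
      simp only [Matrix.trace, Matrix.diag, Matrix.mul_apply, Matrix.transpose_apply, sq]
    have t2 : Matrix.trace ((X * V)ᵀ * (X * V))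
        = Matrix.trace ((Xᵀ * X) * (V * Vᵀ)) := by
      rw [Matrix.transpose_mul, Matrix.mul_assoc, ← Matrix.mul_assoc Xᵀ X V,
        Matrix.trace_mul_comm, Matrix.mul_assoc]
    rw [t1, t2]
    simp [Matrix.trace, Matrix.diag, Matrix.mul_apply]
  have hXXnn : ∀ a b, 0 ≤ (Xᵀ * X) a b := fun a b => by
    rw [Matrix.mul_apply]
    exact Finset.sum_nonneg fun i _ => mul_nonneg (hnonneg i a) (hnonneg i b)
  have hdiag : ∀ a, (Xᵀ * X) a a = 1 := fun a => by
    simpa [Matrix.mul_apply, sq] using hcol a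
  have htr : ∑ a, (V * Vᵀ) a a = 1 := by
    simpa [Matrix.mul_apply, sq] using hV2
  have hE : (∑ i, ∑ j, ((X * V) i j) ^ 2)
      = 1 + ∑ a, ∑ b ∈ Finset.univ.erase a, (Xᵀ * X) a b * (V * Vᵀ) b a := by
    rw [key]
    have h1 : ∀ a : Fin k, ∑ b, (Xᵀ * X) a b * (V * Vᵀ) b a
        = (V * Vᵀ) a a + ∑ b ∈ Finset.univ.erase a, (Xᵀ * X) a b * (V * Vᵀ) b a := by
      intro a
      rw [← Finset.add_sum_erase _ _ (Finset.mem_univ a), hdiag, one_mul]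
    simp_rw [h1]
    rw [Finset.sum_add_distrib, htr]
  have hEnn : 0 ≤ ∑ a, ∑ b ∈ Finset.univ.erase a, (Xᵀ * X) a b * (V * Vᵀ) b a :=
    Finset.sum_nonneg fun a _ => Finset.sum_nonneg fun b _ =>
      mul_nonneg (hXXnn a b) (hVV b a).le
  have hge : 1 ≤ ∑ i, ∑ j, ((X * V) i j) ^ 2 := by rw [hE]; linarith
  have hsq : 1 ≤ Real.sqrt (∑ i, ∑ j, ((X * V) i j) ^ 2) := by
    rw [show (1:ℝ) = Real.sqrt 1 by simp]
    exact Real.sqrt_le_sqrt hge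
  refine ⟨hsq, ?_, ?_⟩
  · intro h
    have hS1 : (∑ i, ∑ j, ((X * V) i j) ^ 2) = 1 := by
      have h2 := Real.sq_sqrt (by linarith : (0:ℝ) ≤ ∑ i, ∑ j, ((X * V) i j) ^ 2)
      rw [h] at h2; nlinarith
    have hEzero : ∑ a, ∑ b ∈ Finset.univ.erase a, (Xᵀ * X) a b * (V * Vᵀ) b a = 0 := by
      rw [hE] at hS1; linarith
    have hterm : ∀ a ∈ (Finset.univ : Finset (Fin k)), ∀ b ∈ Finset.univ.erase a,
        (Xᵀ * X) a b * (V * Vᵀ) b a = 0 := by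
      have h' := (Finset.sum_eq_zero_iff_of_nonneg fun a _ =>
        Finset.sum_nonneg fun b _ => mul_nonneg (hXXnn a b) (hVV b a).le).1 hEzero
      intro a ha b hb
      exact (Finset.sum_eq_zero_iff_of_nonneg fun b _ =>
        mul_nonneg (hXXnn a b) (hVV b a).le).1 (h' a ha) b hb
    ext a b
    by_cases hab : a = b
    · subst hab; simp [hdiag a]
    · have hz : (Xᵀ * X) a b * (V * Vᵀ) b a = 0 :=
        hterm a (Finset.mem_univ a) b (Finset.mem_erase.2 ⟨fun hh => hab hh.symm, Finset.mem_univ b⟩)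
      have := (mul_eq_zero.1 hz).resolve_right (ne_of_gt (hVV b a))
      simp [this, Matrix.one_apply, hab]
  · intro h
    have hz : ∀ a : Fin k, ∀ b ∈ Finset.univ.erase a, (Xᵀ * X) a b * (V * Vᵀ) b a = 0 := by
      intro a b hb
      have hne : b ≠ a := (Finset.mem_erase.1 hb).1
      rw [h, Matrix.one_apply_ne (fun hh => hne hh.symm), zero_mul]
    have hS1 : (∑ i, ∑ j, ((X * V) i j) ^ 2) = 1 := by
      rw [hE, Finset.sum_eq_zero fun a _ => Finset.sum_eq_zero (hz a)]
      ring
    rw [hS1, Real.sqrt_one]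
end

section
/- Let X ∈ OB^{n,k}_+ and let V ∈ ℝ^{k×r} with ‖V‖_F = 1 and ω := min_{i,j∈[k]} (VV^T)_{ij} > 0. Then ‖XV‖_F^2 − 1 ≥ ω ∑_{j∈[k]} x_j^T (∑_{l≠j} x_l). -/
open Matrix Finset

/-- `‖XV‖_F² − 1 ≥ ω ∑_j x_jᵀ (∑_{l≠j} x_l)` where `ω > 0` is a lower bound on the
entries of `VVᵀ` (in particular, the minimum entry). -/
theorem stmt_3 (n k r : ℕ) (X : Matrix (Fin n) (Fin k) ℝ) (V : Matrix (Fin k) (Fin r) ℝ)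
    (hcol : ∀ j, ∑ i, (X i j) ^ 2 = 1) (hnonneg : ∀ i j, 0 ≤ X i j)
    (hV : ∑ i, ∑ j, (V i j) ^ 2 = 1)
    (ω : ℝ) (hωpos : 0 < ω) (hω : ∀ i j : Fin k, ω ≤ (V * Vᵀ) i j) :
    ω * ∑ j : Fin k, ∑ l : Fin k,
        (if l ≠ j then (∑ p, X p j * X p l) else 0) ≤
      (∑ i, ∑ j, ((X * V) i j) ^ 2) - 1 := by
  have key : ∑ i, ∑ j, ((X * V) i j) ^ 2
      = ∑ a : Fin k, ∑ b : Fin k, (∑ p, X p a * X p b) * ((V * Vᵀ) a b) := by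
    calc ∑ i, ∑ j, ((X * V) i j) ^ 2
        = ∑ i : Fin n, ∑ j : Fin r, ∑ a : Fin k, ∑ b : Fin k,
            (X i a * X i b) * (V a j * V b j) := by
          refine Finset.sum_congr rfl fun i _ => Finset.sum_congr rfl fun j _ => ?_
          rw [sq, Matrix.mul_apply, Finset.sum_mul_sum]
          exact Finset.sum_congr rfl fun a _ => Finset.sum_congr rfl fun b _ => by ring
      _ = ∑ i : Fin n, ∑ a : Fin k, ∑ j : Fin r, ∑ b : Fin k,
            (X i a * X i b) * (V a j * V b j) :=
          Finset.sum_congr rfl fun i _ => Finset.sum_comm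
      _ = ∑ a : Fin k, ∑ i : Fin n, ∑ j : Fin r, ∑ b : Fin k,
            (X i a * X i b) * (V a j * V b j) := Finset.sum_comm
      _ = ∑ a : Fin k, ∑ i : Fin n, ∑ b : Fin k, ∑ j : Fin r,
            (X i a * X i b) * (V a j * V b j) :=
          Finset.sum_congr rfl fun a _ => Finset.sum_congr rfl fun i _ => Finset.sum_comm
      _ = ∑ a : Fin k, ∑ b : Fin k, ∑ i : Fin n, ∑ j : Fin r,
            (X i a * X i b) * (V a j * V b j) :=
          Finset.sum_congr rfl fun a _ => Finset.sum_comm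
      _ = ∑ a : Fin k, ∑ b : Fin k, (∑ p, X p a * X p b) * ((V * Vᵀ) a b) := by
          refine Finset.sum_congr rfl fun a _ => Finset.sum_congr rfl fun b _ => ?_
          rw [Matrix.mul_apply, Finset.sum_mul_sum]
          refine Finset.sum_congr rfl fun p _ => ?_
          simp [Matrix.transpose_apply, Finset.mul_sum]
  have hsplit : ∀ a : Fin k, ∑ b : Fin k, (∑ p, X p a * X p b) * ((V * Vᵀ) a b)
      = (V * Vᵀ) a a
        + ∑ b : Fin k, (if b ≠ a then (∑ p, X p a * X p b) * ((V * Vᵀ) a b) else 0) := by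
    intro a
    set f : Fin k → ℝ := fun b => (∑ p, X p a * X p b) * ((V * Vᵀ) a b) with hf
    have h1 : ∀ b, f b = (if b = a then f b else 0) + (if b ≠ a then f b else 0) := by
      intro b; by_cases h : b = a <;> simp [h]
    rw [Finset.sum_congr rfl fun b _ => h1 b, Finset.sum_add_distrib]
    congr 1
    rw [Finset.sum_ite_eq' Finset.univ a f]
    have hXaa : ∑ p, X p a * X p a = 1 := by simpa [sq] using hcol a
    simp [hf, hXaa]
  have hdiag : ∑ a : Fin k, (V * Vᵀ) a a = 1 := by
    simp only [Matrix.mul_apply, Matrix.transpose_apply]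
    simpa [sq] using hV
  rw [key]
  have hrw : ∑ a : Fin k, ∑ b : Fin k, (∑ p, X p a * X p b) * ((V * Vᵀ) a b)
      = 1 + ∑ a : Fin k, ∑ b : Fin k,
          (if b ≠ a then (∑ p, X p a * X p b) * ((V * Vᵀ) a b) else 0) := by
    rw [Finset.sum_congr rfl fun a _ => hsplit a, Finset.sum_add_distrib, hdiag]
  rw [hrw, add_sub_cancel_left, Finset.mul_sum]
  refine Finset.sum_le_sum fun a _ => ?_
  rw [Finset.mul_sum]
  refine Finset.sum_le_sum fun b _ => ?_
  split_ifs with h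
  · have hS : 0 ≤ ∑ p, X p a * X p b :=
      Finset.sum_nonneg fun p _ => mul_nonneg (hnonneg p a) (hnonneg p b)
    calc ω * ∑ p, X p a * X p b = (∑ p, X p a * X p b) * ω := by ring
      _ ≤ (∑ p, X p a * X p b) * ((V * Vᵀ) a b) :=
          mul_le_mul_of_nonneg_left (hω a b) hS
  · simp
end

section
/- Let X ∈ OB^{n,k}_+ and V ∈ ℝ^{k×r} with ‖V‖_F = 1. Then 1 ≤ ‖XV‖_F ≤ √k. -/
open Matrix Finset

/-- For `X` in the nonnegative oblique manifold and unit-Frobenius-norm `V` with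
`VVᵀ` entrywise positive, `1 ≤ ‖XV‖_F ≤ √k`. -/
theorem stmt_4 (n k r : ℕ) (X : Matrix (Fin n) (Fin k) ℝ) (V : Matrix (Fin k) (Fin r) ℝ)
    (hcol : ∀ j, ∑ i, (X i j) ^ 2 = 1) (hnonneg : ∀ i j, 0 ≤ X i j)
    (hV : Real.sqrt (∑ i, ∑ j, (V i j) ^ 2) = 1)
    (hVV : ∀ i j : Fin k, 0 < (V * Vᵀ) i j) :
    1 ≤ Real.sqrt (∑ i, ∑ j, ((X * V) i j) ^ 2) ∧
      Real.sqrt (∑ i, ∑ j, ((X * V) i j) ^ 2) ≤ Real.sqrt k := by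
  have hVsum : (∑ i, ∑ j, (V i j) ^ 2) = 1 := by
    have h0 : (0:ℝ) ≤ ∑ i, ∑ j, (V i j) ^ 2 :=
      Finset.sum_nonneg fun i _ => Finset.sum_nonneg fun j _ => sq_nonneg _
    nlinarith [Real.sq_sqrt h0, hV]
  -- expansion of the squared Frobenius norm
  have expand : (∑ i, ∑ j, ((X * V) i j) ^ 2)
      = ∑ a, ∑ b, (∑ i, X i a * X i b) * (∑ j, V a j * V b j) := by
    have h1 : ∀ i j, ((X * V) i j) ^ 2
        = ∑ a, ∑ b, (X i a * X i b) * (V a j * V b j) := by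
      intro i j
      rw [Matrix.mul_apply, sq,
        Finset.sum_mul_sum Finset.univ Finset.univ (fun a => X i a * V a j)
          (fun b => X i b * V b j)]
      exact Finset.sum_congr rfl fun a _ => Finset.sum_congr rfl fun b _ => by ring
    simp_rw [h1]
    have swap4 : ∀ (F : Fin n → Fin r → Fin k → Fin k → ℝ),
        ∑ i, ∑ j, ∑ a, ∑ b, F i j a b = ∑ a, ∑ b, ∑ i, ∑ j, F i j a b := fun F =>
      calc ∑ i, ∑ j, ∑ a, ∑ b, F i j a b
          = ∑ i, ∑ a, ∑ b, ∑ j, F i j a b := Finset.sum_congr rfl fun i _ => by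
            rw [Finset.sum_comm]; exact Finset.sum_congr rfl fun a _ => Finset.sum_comm
        _ = ∑ a, ∑ i, ∑ b, ∑ j, F i j a b := Finset.sum_comm
        _ = ∑ a, ∑ b, ∑ i, ∑ j, F i j a b := Finset.sum_congr rfl fun a _ =>
            Finset.sum_comm
    rw [swap4]
    refine Finset.sum_congr rfl fun a _ => Finset.sum_congr rfl fun b _ => ?_
    rw [Finset.sum_mul_sum Finset.univ Finset.univ
      (fun i => X i a * X i b) (fun j => V a j * V b j)]
  have hS0 : (0:ℝ) ≤ ∑ i, ∑ j, ((X * V) i j) ^ 2 :=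
    Finset.sum_nonneg fun i _ => Finset.sum_nonneg fun j _ => sq_nonneg _
  constructor
  · -- lower bound
    rw [show (1:ℝ) = Real.sqrt 1 from (Real.sqrt_one).symm]
    apply Real.sqrt_le_sqrt
    rw [expand]
    have hdiag : (1:ℝ) = ∑ a : Fin k, (∑ i, X i a * X i a) * (∑ j, V a j * V a j) := by
      calc (1:ℝ) = ∑ a, ∑ j, (V a j) ^ 2 := hVsum.symm
        _ = ∑ a : Fin k, (∑ i, X i a * X i a) * (∑ j, V a j * V a j) := by
            refine Finset.sum_congr rfl fun a _ => ?_
            have : (∑ i, X i a * X i a) = 1 := by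
              rw [← hcol a]; exact Finset.sum_congr rfl fun i _ => (sq (X i a)).symm
            rw [this, one_mul]
            exact Finset.sum_congr rfl fun j _ => sq (V a j)
    rw [hdiag]
    refine Finset.sum_le_sum fun a _ => ?_
    have hterm : ∀ b ∈ Finset.univ,
        (0:ℝ) ≤ (∑ i, X i b * X i b) * (∑ j, V b j * V b j) := by
      intro b _
      exact mul_nonneg (Finset.sum_nonneg fun i _ => mul_nonneg (hnonneg i b) (hnonneg i b))
        (Finset.sum_nonneg fun j _ => mul_self_nonneg _)
    refine Finset.single_le_sum (f := fun b => (∑ i, X i a * X i b) * (∑ j, V a j * V b j))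
      (fun b _ => mul_nonneg
        (Finset.sum_nonneg fun i _ => mul_nonneg (hnonneg i a) (hnonneg i b))
        (le_of_lt (by have := hVV a b; simpa [Matrix.mul_apply, Matrix.transpose_apply] using this)))
      (Finset.mem_univ a)
  · -- upper bound
    apply Real.sqrt_le_sqrt
    calc (∑ i, ∑ j, ((X * V) i j) ^ 2)
        ≤ ∑ i, ∑ j, (∑ a, (X i a) ^ 2) * (∑ a, (V a j) ^ 2) := by
          refine Finset.sum_le_sum fun i _ => Finset.sum_le_sum fun j _ => ?_
          rw [Matrix.mul_apply]
          exact Finset.sum_mul_sq_le_sq_mul_sq Finset.univ (fun a => X i a) (fun a => V a j)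
      _ = (∑ i, ∑ a, (X i a) ^ 2) * (∑ j, ∑ a, (V a j) ^ 2) := by
          rw [Finset.sum_mul_sum Finset.univ Finset.univ (fun i => ∑ a, (X i a) ^ 2)
            (fun j => ∑ a, (V a j) ^ 2)]
      _ ≤ k := by
          have h1 : (∑ i, ∑ a, (X i a) ^ 2) = k := by
            rw [Finset.sum_comm]
            simp [hcol]
          have h2 : (∑ j, ∑ a, (V a j) ^ 2) = 1 := by
            rw [Finset.sum_comm]; exact hVsum
          rw [h1, h2, mul_one]
end

section
/- Let X ∈ OB^{n,k}_+, V ∈ ℝ^{k×r} with ‖V‖_F = 1 and ω := min_{i,j} (VV^T)_{ij} > 0. Fix a column index j ∈ [k]. If for every row i ∈ [n] there holds X_{ij} ≤ max_{l ∈ [k], l≠j} X_{il}, then ‖XV‖_F^2 − 1 ≥ ω. -/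
open Matrix Finset

/-- If in column `j` every entry is dominated by some entry of the same row in another
column (i.e. `X_{ij} ≤ max_{l ≠ j} X_{il}` for all rows `i`), then the orthogonality
violation `‖XV‖_F² − 1` is at least `ω`, a positive lower bound for the entries of `VVᵀ`. -/
theorem stmt_6 (n k r : ℕ) (X : Matrix (Fin n) (Fin k) ℝ) (V : Matrix (Fin k) (Fin r) ℝ)
    (hcol : ∀ j, ∑ i, (X i j) ^ 2 = 1) (hnonneg : ∀ i j, 0 ≤ X i j)
    (hV : ∑ i, ∑ j, (V i j) ^ 2 = 1)
    (ω : ℝ) (hωpos : 0 < ω) (hω : ∀ i j : Fin k, ω ≤ (V * Vᵀ) i j)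
    (j : Fin k) (hdom : ∀ i : Fin n, ∃ l : Fin k, l ≠ j ∧ X i j ≤ X i l) :
    ω ≤ (∑ i, ∑ j, ((X * V) i j) ^ 2) - 1 := by
  classical
  have hVVpos : ∀ a b : Fin k, (0:ℝ) ≤ (V * Vᵀ) a b := fun a b =>
    le_of_lt (lt_of_lt_of_le hωpos (hω a b))
  have term_nonneg : ∀ (i : Fin n) (a b : Fin k),
      0 ≤ X i a * X i b * (V * Vᵀ) a b := fun i a b =>
    mul_nonneg (mul_nonneg (hnonneg i a) (hnonneg i b)) (hVVpos a b)
  have key : (∑ i, ∑ c, ((X * V) i c) ^ 2)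
      = ∑ i, ∑ a, ∑ b, X i a * X i b * (V * Vᵀ) a b := by
    refine Finset.sum_congr rfl fun i _ => ?_
    calc ∑ c, ((X * V) i c) ^ 2
        = ∑ c, (∑ a, X i a * V a c) * (∑ b, X i b * V b c) := by
          simp [Matrix.mul_apply, sq]
      _ = ∑ c, ∑ a, ∑ b, (X i a * V a c) * (X i b * V b c) := by
          refine Finset.sum_congr rfl fun c _ => ?_
          rw [Finset.sum_mul_sum]
      _ = ∑ a, ∑ b, ∑ c, (X i a * V a c) * (X i b * V b c) := by
          rw [Finset.sum_comm]
          exact Finset.sum_congr rfl fun a _ => Finset.sum_comm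
      _ = ∑ a, ∑ b, X i a * X i b * (V * Vᵀ) a b := by
          refine Finset.sum_congr rfl fun a _ => Finset.sum_congr rfl fun b _ => ?_
          rw [Matrix.mul_apply, Finset.mul_sum]
          exact Finset.sum_congr rfl fun c _ => by simp [Matrix.transpose_apply]; ring
  -- split diagonal and off-diagonal
  have split : ∀ i : Fin n, (∑ a, ∑ b, X i a * X i b * (V * Vᵀ) a b)
      = (∑ a, X i a * X i a * (V * Vᵀ) a a)
        + ∑ a, ∑ b ∈ Finset.univ.erase a, X i a * X i b * (V * Vᵀ) a b := by
    intro i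
    rw [← Finset.sum_add_distrib]
    refine Finset.sum_congr rfl fun a _ => ?_
    rw [← Finset.add_sum_erase _ _ (Finset.mem_univ a)]
  have diag : (∑ i, ∑ a, X i a * X i a * (V * Vᵀ) a a) = 1 := by
    rw [Finset.sum_comm]
    calc (∑ a, ∑ i, X i a * X i a * (V * Vᵀ) a a)
        = ∑ a, (V * Vᵀ) a a * ∑ i, (X i a) ^ 2 := by
          refine Finset.sum_congr rfl fun a _ => ?_
          rw [Finset.mul_sum]
          exact Finset.sum_congr rfl fun i _ => by ring
      _ = ∑ a, (V * Vᵀ) a a := by simp [hcol]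
      _ = ∑ a, ∑ c, (V a c) ^ 2 := by
          refine Finset.sum_congr rfl fun a _ => ?_
          rw [Matrix.mul_apply]
          exact Finset.sum_congr rfl fun c _ => by simp [Matrix.transpose_apply, sq]
      _ = 1 := hV
  have offbound : ω ≤ ∑ i, ∑ a, ∑ b ∈ Finset.univ.erase a,
      X i a * X i b * (V * Vᵀ) a b := by
    have h1 : ∀ i : Fin n, ω * (X i j) ^ 2
        ≤ ∑ a, ∑ b ∈ Finset.univ.erase a, X i a * X i b * (V * Vᵀ) a b := by
      intro i
      obtain ⟨l, hlj, hle⟩ := hdom i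
      have hterm : ω * (X i j) ^ 2 ≤ X i j * X i l * (V * Vᵀ) j l := by
        calc ω * (X i j) ^ 2 = (X i j * X i j) * ω := by ring
          _ ≤ (X i j * X i l) * ((V * Vᵀ) j l) := by
              apply mul_le_mul
              · exact mul_le_mul_of_nonneg_left hle (hnonneg i j)
              · exact hω j l
              · exact le_of_lt hωpos
              · exact mul_nonneg (hnonneg i j) (hnonneg i l)
      refine le_trans hterm ?_
      refine le_trans ?_ (Finset.single_le_sum
        (f := fun a => ∑ b ∈ Finset.univ.erase a, X i a * X i b * (V * Vᵀ) a b)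
        (fun a _ => Finset.sum_nonneg fun b _ => term_nonneg i a b)
        (Finset.mem_univ j))
      exact Finset.single_le_sum (fun b _ => term_nonneg i j b)
        (Finset.mem_erase.mpr ⟨hlj, Finset.mem_univ l⟩)
    calc ω = ω * ∑ i, (X i j) ^ 2 := by rw [hcol j, mul_one]
      _ = ∑ i, ω * (X i j) ^ 2 := Finset.mul_sum _ _ _
      _ ≤ _ := Finset.sum_le_sum fun i _ => h1 i
  rw [key]
  have : (∑ i, ∑ a, ∑ b, X i a * X i b * (V * Vᵀ) a b)
      = 1 + ∑ i, ∑ a, ∑ b ∈ Finset.univ.erase a, X i a * X i b * (V * Vᵀ) a b := by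
    rw [← diag, ← Finset.sum_add_distrib]
    exact Finset.sum_congr rfl fun i _ => split i
  rw [this]
  linarith
end

section
/- There exists a constant ρ > 0 (one can take ρ = (2k/ω)^{1/2} where ω = min_{i,j}(VV^T)_{ij}) such that for every X ∈ OB^{n,k}_+, the distance from X to S^{n,k}_+ satisfies dist(X, S^{n,k}_+) ≤ ρ · (‖XV‖_F^2 − 1)^{1/2}, where V ∈ ℝ^{k×r} satisfies ‖V‖_F = 1 and all entries of VV^T are positive. -/
/-!
Let `G = XᵀX`: its entries are nonnegative and its diagonal is `1`. Write `e j` for the sum of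
the off-diagonal entries of column `j` of `G`. Since `‖V‖_F = 1`,
`‖XV‖_F² - 1 = ∑_{a ≠ b} G a b (VVᵀ) a b ≥ ω ∑ j, e j`, so it suffices to find `Y ∈ S^{n,k}_+`
with `‖X - Y‖_F² ≤ 8k ∑ j, e j`.

If every `e j ≤ 1/2`, keep in each row of `X` only a largest entry and normalise the columns.
The columns then have disjoint supports, hence are orthonormal, and column `j` loses at most
`e j` of its mass, because an entry that is not the maximum of its row is bounded by its product
with that maximum; this moves `X` by at most `2 ∑ j, e j`. Otherwise `∑ j, e j > 1/2`, and any
`Z ∈ S^{n,k}_+` will do, since `‖X - Z‖_F² ≤ 4k`.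
-/

open Matrix Finset

theorem exists_pos_forall_le_of_forall_pos {α : Type*} [Finite α] {f : α → ℝ}
    (hf : ∀ a, 0 < f a) : ∃ ω > 0, ∀ a, ω ≤ f a := by
  rcases isEmpty_or_nonempty α with hα | hα
  · exact ⟨1, one_pos, isEmptyElim⟩
  · obtain ⟨a₀, ha₀⟩ := Finite.exists_min f
    exact ⟨f a₀, hf a₀, ha₀⟩

section Column

variable {m : Type*} [Fintype m] {x p : m → ℝ}

theorem sum_sq_sub_eq_one_sub (hx : ∑ i, x i ^ 2 = 1) (hp : ∀ i, p i * x i = p i ^ 2) :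
    ∑ i, (x i - p i) ^ 2 = 1 - ∑ i, p i ^ 2 := by
  have h : ∀ i, (x i - p i) ^ 2 = x i ^ 2 - p i ^ 2 := fun i => by linear_combination -2 * hp i
  rw [Finset.sum_congr rfl fun i _ => h i, Finset.sum_sub_distrib, hx]

theorem sum_sq_sub_div_sqrt_le (hx : ∑ i, x i ^ 2 = 1) (hp : ∀ i, p i * x i = p i ^ 2)
    (hpos : 0 < ∑ i, p i ^ 2) :
    ∑ i, (x i - p i / √(∑ i, p i ^ 2)) ^ 2 ≤ 2 * ∑ i, (x i - p i) ^ 2 := by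
  set S := ∑ i, p i ^ 2
  set c := √S
  have hc : 0 < c := Real.sqrt_pos.mpr hpos
  have hc2 : c ^ 2 = S := Real.sq_sqrt hpos.le
  have hS1 : S ≤ 1 := by
    have h0 : 0 ≤ ∑ i, (x i - p i) ^ 2 := by positivity
    rw [sum_sq_sub_eq_one_sub hx hp] at h0
    linarith
  have h : ∀ i, (x i - p i / c) ^ 2 = x i ^ 2 - 2 / c * p i ^ 2 + p i ^ 2 / c ^ 2 := fun i => by
    field_simp
    linear_combination (-2 * c) * hp i
  rw [Finset.sum_congr rfl fun i _ => h i, Finset.sum_add_distrib, Finset.sum_sub_distrib,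
    ← Finset.mul_sum, ← Finset.sum_div, hx, sum_sq_sub_eq_one_sub hx hp]
  change 1 - 2 / c * S + S / c ^ 2 ≤ 2 * (1 - S)
  have hc1 : c ≤ 1 := Real.sqrt_le_one.mpr hS1
  rw [← hc2]
  field_simp
  nlinarith

end Column

section Gram

variable {m ι κ : Type*} [Fintype m] [Fintype ι] [Fintype κ]

theorem sum_sq_mul_eq_sum_gram_mul (X : Matrix m ι ℝ) (V : Matrix ι κ ℝ) :
    ∑ i, ∑ j, (X * V) i j ^ 2 = ∑ a, ∑ b, (Xᵀ * X) a b * (V * Vᵀ) a b := by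
  calc ∑ i, ∑ j, (X * V) i j ^ 2 = trace (X * V * (X * V)ᵀ) := by
        simp only [sq]; rfl
    _ = trace (Xᵀ * X * (V * Vᵀ)ᵀ) := by
        rw [transpose_mul, transpose_mul, transpose_transpose, ← Matrix.mul_assoc,
          trace_mul_comm, ← Matrix.mul_assoc, ← Matrix.mul_assoc, Matrix.mul_assoc (Xᵀ * X)]
    _ = ∑ a, ∑ b, (Xᵀ * X) a b * (V * Vᵀ) a b := rfl

theorem sum_sq_sub_le_four_mul_card {X Z : Matrix m ι ℝ} (hX : ∀ j, ∑ i, X i j ^ 2 = 1)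
    (hZ : ∀ j, ∑ i, Z i j ^ 2 = 1) : ∑ i, ∑ j, (X - Z) i j ^ 2 ≤ 4 * Fintype.card ι := by
  calc ∑ i, ∑ j, (X - Z) i j ^ 2 = ∑ j, ∑ i, (X i j - Z i j) ^ 2 := Finset.sum_comm
    _ ≤ ∑ j, ∑ i, (2 * X i j ^ 2 + 2 * Z i j ^ 2) :=
        Finset.sum_le_sum fun j _ => Finset.sum_le_sum fun i _ => by
          nlinarith [sq_nonneg (X i j + Z i j)]
    _ = 4 * Fintype.card ι := by
        simp only [Finset.sum_add_distrib, ← Finset.mul_sum, hX, hZ]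
        rw [Finset.sum_const, card_univ, nsmul_eq_mul]
        ring

variable [DecidableEq ι]

def gramOffDiagSum (X : Matrix m ι ℝ) (j : ι) : ℝ := ∑ b ∈ univ.erase j, (Xᵀ * X) j b

theorem gramOffDiagSum_nonneg {X : Matrix m ι ℝ} (hX0 : ∀ i j, 0 ≤ X i j) (j : ι) :
    0 ≤ gramOffDiagSum X j :=
  Finset.sum_nonneg fun b _ => Finset.sum_nonneg fun i _ => mul_nonneg (hX0 i j) (hX0 i b)

theorem sum_sq_mul_sub_one_eq {X : Matrix m ι ℝ} {V : Matrix ι κ ℝ}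
    (hX : ∀ j, ∑ i, X i j ^ 2 = 1) (hV : ∑ i, ∑ j, V i j ^ 2 = 1) :
    ∑ i, ∑ j, (X * V) i j ^ 2 - 1 = ∑ a, ∑ b ∈ univ.erase a, (Xᵀ * X) a b * (V * Vᵀ) a b := by
  have hdiag : ∀ a, (Xᵀ * X) a a * (V * Vᵀ) a a = ∑ j, V a j ^ 2 := fun a => by
    simp only [mul_apply, transpose_apply, ← sq, hX, one_mul]
  have hrow : ∀ a, ∑ b, (Xᵀ * X) a b * (V * Vᵀ) a b
      = ∑ j, V a j ^ 2 + ∑ b ∈ univ.erase a, (Xᵀ * X) a b * (V * Vᵀ) a b := fun a => by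
    rw [← Finset.add_sum_erase _ _ (Finset.mem_univ a), hdiag]
  rw [sum_sq_mul_eq_sum_gram_mul, Finset.sum_congr rfl fun a _ => hrow a, Finset.sum_add_distrib,
    hV, add_sub_cancel_left]

theorem mul_sum_gramOffDiagSum_le {X : Matrix m ι ℝ} {V : Matrix ι κ ℝ} {ω : ℝ}
    (hX : ∀ j, ∑ i, X i j ^ 2 = 1) (hX0 : ∀ i j, 0 ≤ X i j) (hV : ∑ i, ∑ j, V i j ^ 2 = 1)
    (hω : ∀ a b, ω ≤ (V * Vᵀ) a b) :
    ω * ∑ j, gramOffDiagSum X j ≤ ∑ i, ∑ j, (X * V) i j ^ 2 - 1 := by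
  rw [sum_sq_mul_sub_one_eq hX hV, Finset.mul_sum]
  refine Finset.sum_le_sum fun a _ => ?_
  rw [gramOffDiagSum, Finset.mul_sum]
  refine Finset.sum_le_sum fun b _ => ?_
  rw [mul_comm]
  exact mul_le_mul_of_nonneg_left (hω a b)
    (Finset.sum_nonneg fun i _ => mul_nonneg (hX0 i a) (hX0 i b))

end Gram

section Rounding

variable {m ι : Type*} [DecidableEq ι]

def maskCols (σ : m → ι) (X : Matrix m ι ℝ) : Matrix m ι ℝ :=
  of fun i j => if σ i = j then X i j else 0

theorem maskCols_mul_self (σ : m → ι) (X : Matrix m ι ℝ) (i : m) (j : ι) :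
    maskCols σ X i j * X i j = maskCols σ X i j ^ 2 := by
  simp only [maskCols, of_apply]
  split_ifs <;> ring

variable [Fintype m]

theorem transpose_mul_self_maskCols (σ : m → ι) (X : Matrix m ι ℝ) :
    (maskCols σ X)ᵀ * maskCols σ X = diagonal fun j => ∑ i, maskCols σ X i j ^ 2 := by
  ext a b
  rcases eq_or_ne a b with rfl | hab
  · simp only [mul_apply, transpose_apply, diagonal_apply_eq, sq]
  · rw [diagonal_apply_ne _ hab, mul_apply]
    refine Finset.sum_eq_zero fun i _ => ?_
    simp only [transpose_apply, maskCols, of_apply]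
    split_ifs <;> simp_all

theorem sum_sq_col_eq_one_of_transpose_mul_self_eq_one {Z : Matrix m ι ℝ} (hZ : Zᵀ * Z = 1)
    (j : ι) : ∑ i, Z i j ^ 2 = 1 := by
  simpa [mul_apply, sq] using congrFun (congrFun hZ j) j

variable [Fintype ι]

theorem sum_sq_sub_maskCols_le {σ : m → ι} {X : Matrix m ι ℝ} (hX0 : ∀ i j, 0 ≤ X i j)
    (hσ : ∀ i l, X i l ≤ X i (σ i)) (j : ι) :
    ∑ i, (X i j - maskCols σ X i j) ^ 2 ≤ gramOffDiagSum X j := by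
  simp only [gramOffDiagSum, mul_apply, transpose_apply]
  rw [Finset.sum_comm]
  refine Finset.sum_le_sum fun i _ => ?_
  have hsum_nonneg : 0 ≤ ∑ b ∈ univ.erase j, X i j * X i b :=
    Finset.sum_nonneg fun b _ => mul_nonneg (hX0 i j) (hX0 i b)
  by_cases hij : σ i = j
  · simpa [maskCols, hij] using hsum_nonneg
  · simp only [maskCols, of_apply, hij, if_false, sub_zero]
    calc X i j ^ 2 ≤ X i j * X i (σ i) := by
          rw [sq]; exact mul_le_mul_of_nonneg_left (hσ i j) (hX0 i j)
      _ ≤ ∑ b ∈ univ.erase j, X i j * X i b :=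
          Finset.single_le_sum (f := fun b => X i j * X i b)
            (fun b _ => mul_nonneg (hX0 i j) (hX0 i b)) (Finset.mem_erase.mpr ⟨hij, mem_univ _⟩)

theorem exists_nonnegStiefel_sum_sq_sub_le_two_mul [Nonempty ι] {X : Matrix m ι ℝ}
    (hX : ∀ j, ∑ i, X i j ^ 2 = 1) (hX0 : ∀ i j, 0 ≤ X i j)
    (he : ∀ j, gramOffDiagSum X j ≤ 1 / 2) :
    ∃ Y : Matrix m ι ℝ, (Yᵀ * Y = 1 ∧ ∀ i j, 0 ≤ Y i j) ∧
      ∑ i, ∑ j, (X - Y) i j ^ 2 ≤ 2 * ∑ j, gramOffDiagSum X j := by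
  choose σ hσ using fun i => Finite.exists_max (X i)
  set P := maskCols σ X
  have hP : ∀ j, 1 / 2 ≤ ∑ i, P i j ^ 2 := fun j => by
    have := sum_sq_sub_eq_one_sub (hX j) (maskCols_mul_self σ X · j)
    linarith [sum_sq_sub_maskCols_le hX0 hσ j, he j]
  set d : ι → ℝ := fun j => (√(∑ i, P i j ^ 2))⁻¹
  refine ⟨P * diagonal d, ⟨?_, fun i j => ?_⟩, ?_⟩
  · rw [transpose_mul, diagonal_transpose, Matrix.mul_assoc, ← Matrix.mul_assoc Pᵀ,
      transpose_mul_self_maskCols, diagonal_mul_diagonal, diagonal_mul_diagonal, ← diagonal_one]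
    congr 1
    funext j
    have hS : 0 < ∑ i, P i j ^ 2 := by linarith [hP j]
    have hc : 0 < √(∑ i, P i j ^ 2) := Real.sqrt_pos.mpr hS
    simp only [d]
    field_simp
    exact (Real.sq_sqrt hS.le).symm
  · rw [mul_diagonal]
    refine mul_nonneg ?_ (by positivity)
    simp only [P, maskCols, of_apply]
    split_ifs
    exacts [hX0 i j, le_rfl]
  · rw [Finset.sum_comm, Finset.mul_sum]
    refine Finset.sum_le_sum fun j _ => ?_
    simp only [Matrix.sub_apply, mul_diagonal, d, ← div_eq_mul_inv]
    exact (sum_sq_sub_div_sqrt_le (hX j) (maskCols_mul_self σ X · j) (by linarith [hP j])).trans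
      (by linarith [sum_sq_sub_maskCols_le hX0 hσ j])

theorem exists_nonnegStiefel_sum_sq_sub_le {X : Matrix m ι ℝ}
    (hX : ∀ j, ∑ i, X i j ^ 2 = 1) (hX0 : ∀ i j, 0 ≤ X i j)
    (hne : ∃ Z : Matrix m ι ℝ, Zᵀ * Z = 1 ∧ ∀ i j, 0 ≤ Z i j) :
    ∃ Y : Matrix m ι ℝ, (Yᵀ * Y = 1 ∧ ∀ i j, 0 ≤ Y i j) ∧
      ∑ i, ∑ j, (X - Y) i j ^ 2 ≤ 8 * Fintype.card ι * ∑ j, gramOffDiagSum X j := by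
  have hs : 0 ≤ ∑ j, gramOffDiagSum X j :=
    Finset.sum_nonneg fun j _ => gramOffDiagSum_nonneg hX0 j
  by_cases hgood : Nonempty ι ∧ ∀ j, gramOffDiagSum X j ≤ 1 / 2
  · obtain ⟨_, he⟩ := hgood
    obtain ⟨Y, hY, hXY⟩ := exists_nonnegStiefel_sum_sq_sub_le_two_mul hX hX0 he
    have hk : (1 : ℝ) ≤ Fintype.card ι := by exact_mod_cast Fintype.card_pos
    exact ⟨Y, hY, hXY.trans (by nlinarith)⟩
  · obtain ⟨Z, hZ⟩ := hne
    refine ⟨Z, hZ, (sum_sq_sub_le_four_mul_card hX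
      (sum_sq_col_eq_one_of_transpose_mul_self_eq_one hZ.1)).trans ?_⟩
    rcases isEmpty_or_nonempty ι with hι | hι
    · simp
    · obtain ⟨j, hj⟩ : ∃ j, 1 / 2 < gramOffDiagSum X j := by simpa [hι] using hgood
      have hs2 : 1 / 2 < ∑ j, gramOffDiagSum X j := hj.trans_le
        (Finset.single_le_sum (fun j _ => gramOffDiagSum_nonneg hX0 j) (mem_univ j))
      nlinarith [Nat.cast_nonneg (α := ℝ) (Fintype.card ι)]

end Rounding

/-- Error bound with exponent 1/2 for the nonnegative Stiefel manifold `S^{n,k}_+`: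
there is `ρ > 0` so that every `X` in the nonnegative oblique manifold has a point
`Y ∈ S^{n,k}_+` with `‖X − Y‖_F ≤ ρ √(‖XV‖_F² − 1)`. -/
theorem stmt_7 (n k r : ℕ) (V : Matrix (Fin k) (Fin r) ℝ)
    (hV : Real.sqrt (∑ i, ∑ j, (V i j) ^ 2) = 1)
    (hVV : ∀ i j : Fin k, 0 < (V * Vᵀ) i j)
    (hne : ∃ Z : Matrix (Fin n) (Fin k) ℝ, Zᵀ * Z = 1 ∧ ∀ i j, 0 ≤ Z i j) :
    ∃ ρ : ℝ, 0 < ρ ∧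
      ∀ X : Matrix (Fin n) (Fin k) ℝ,
        (∀ j, ∑ i, (X i j) ^ 2 = 1) → (∀ i j, 0 ≤ X i j) →
        ∃ Y : Matrix (Fin n) (Fin k) ℝ, (Yᵀ * Y = 1 ∧ ∀ i j, 0 ≤ Y i j) ∧
          Real.sqrt (∑ i, ∑ j, ((X - Y) i j) ^ 2) ≤
            ρ * Real.sqrt ((∑ i, ∑ j, ((X * V) i j) ^ 2) - 1) := by
  obtain ⟨ω, hω, hωV⟩ := exists_pos_forall_le_of_forall_pos fun p : Fin k × Fin k => hVV p.1 p.2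
  have hV1 : ∑ i, ∑ j, V i j ^ 2 = 1 := by
    rw [← Real.sq_sqrt (by positivity : (0 : ℝ) ≤ ∑ i, ∑ j, V i j ^ 2), hV, one_pow]
  refine ⟨√((8 * k + 1) / ω), Real.sqrt_pos.mpr (by positivity), fun X hX hX0 => ?_⟩
  obtain ⟨Y, hY, hXY⟩ := exists_nonnegStiefel_sum_sq_sub_le hX hX0 hne
  have hT := mul_sum_gramOffDiagSum_le hX hX0 hV1 fun a b => hωV (a, b)
  refine ⟨Y, hY, ?_⟩
  rw [← Real.sqrt_mul (by positivity)]
  refine Real.sqrt_le_sqrt (hXY.trans ?_)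
  simp only [Fintype.card_fin]
  rw [div_mul_eq_mul_div, le_div_iff₀ hω]
  have hs : 0 ≤ ∑ j, gramOffDiagSum X j := Finset.sum_nonneg fun j _ => gramOffDiagSum_nonneg hX0 j
  nlinarith
end

section
/- For all reals b > a > 0 and p ∈ (0, 1], (a + b)^p − a^p ≥ (1 − 2^{−p}) b^p. -/
/-- For `b > a > 0` and `p ∈ (0, 1]`, `(a + b)^p − a^p ≥ (1 − 2^{−p}) b^p`. -/
theorem stmt_10 (a b p : ℝ) (ha : 0 < a) (hab : a < b) (hp0 : 0 < p) (hp1 : p ≤ 1) :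
    (1 - (2 : ℝ) ^ (-p)) * b ^ p ≤ (a + b) ^ p - a ^ p := by
  have hb : 0 < b := ha.trans hab
  have hc : 0 < a + b := by linarith
  have hdiv : a / (a + b) ≤ 2⁻¹ := by
    rw [div_le_iff₀ hc]; linarith
  have h2p : ((2 : ℝ))⁻¹ ^ p = (2 : ℝ) ^ (-p) := by
    rw [Real.rpow_neg (by norm_num), ← Real.inv_rpow (by norm_num)]
  have h1 : (a / (a + b)) ^ p ≤ (2 : ℝ) ^ (-p) := by
    rw [← h2p]
    exact Real.rpow_le_rpow (by positivity) hdiv hp0.le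
  have h2 : b ^ p ≤ (a + b) ^ p :=
    Real.rpow_le_rpow hb.le (by linarith) hp0.le
  have hneg : (2 : ℝ) ^ (-p) ≤ 1 := by
    rw [← Real.rpow_zero 2]
    exact Real.rpow_le_rpow_of_exponent_le (by norm_num) (by linarith)
  have key : (1 - (2 : ℝ) ^ (-p)) * b ^ p ≤ (1 - (a / (a + b)) ^ p) * (a + b) ^ p := by
    apply mul_le_mul (by linarith) h2 (by positivity) (by linarith)
  calc (1 - (2 : ℝ) ^ (-p)) * b ^ p ≤ (1 - (a / (a + b)) ^ p) * (a + b) ^ p := key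
    _ = (a + b) ^ p - a ^ p := by
        rw [Real.div_rpow ha.le hc.le]
        field_simp
end

section
/- Let X ∈ OB^{n,k}_+, V ∈ ℝ^{k×r} with ‖V‖_F = 1 and all entries of VV^T positive, and write ζ_q(X) = ‖XV‖_F^q − 1. Then ζ_2(X) ≤ c_q · ζ_q(X), where c_q = 1 if q ≥ 2, c_q = (√k + 1)/q if 1 ≤ q < 2, and c_q = 2√k(√k+1)/(q(q+1)) if 0 < q ≤ 1. -/
open Matrix Finset

private lemma swap4_stmt12 {α β γ δ : Type*} [Fintype α] [Fintype β] [Fintype γ] [Fintype δ]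
    (f : α → β → γ → δ → ℝ) :
    ∑ i, ∑ j, ∑ a, ∑ b, f i j a b = ∑ a, ∑ b, ∑ i, ∑ j, f i j a b :=
  calc ∑ i, ∑ j, ∑ a, ∑ b, f i j a b
      = ∑ i, ∑ a, ∑ j, ∑ b, f i j a b :=
        Finset.sum_congr rfl fun _ _ => Finset.sum_comm
    _ = ∑ a, ∑ i, ∑ j, ∑ b, f i j a b := Finset.sum_comm
    _ = ∑ a, ∑ i, ∑ b, ∑ j, f i j a b :=
        Finset.sum_congr rfl fun _ _ => Finset.sum_congr rfl fun _ _ => Finset.sum_comm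
    _ = ∑ a, ∑ b, ∑ i, ∑ j, f i j a b :=
        Finset.sum_congr rfl fun _ _ => Finset.sum_comm

private lemma aux_scalar_stmt12 (t c q : ℝ) (hq : 0 < q) (ht1 : 1 ≤ t) (htc : t ≤ c) :
    t ^ (2 : ℝ) - 1 ≤
      (if 2 ≤ q then (1 : ℝ)
        else if 1 ≤ q then (c + 1) / q
        else 2 * c * (c + 1) / (q * (q + 1))) * (t ^ q - 1) := by
  have ht0 : (0 : ℝ) < t := by linarith
  have ht2 : t ^ (2 : ℝ) = t ^ 2 := by
    rw [show (2:ℝ) = ((2:ℕ):ℝ) by norm_num, Real.rpow_natCast]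
  split_ifs with h2 h1
  · -- q ≥ 2
    have htq : t ^ (2:ℝ) ≤ t ^ q := Real.rpow_le_rpow_of_exponent_le ht1 h2
    linarith
  · -- 1 ≤ q < 2 : Bernoulli with exponent q
    have hb : 1 + q * (t - 1) ≤ t ^ q := by
      have := one_add_mul_self_le_rpow_one_add (s := t - 1) (by linarith) h1
      simpa using this
    rw [ht2, div_mul_eq_mul_div, le_div_iff₀ hq]
    nlinarith [mul_nonneg (sub_nonneg.2 ht1) (sub_nonneg.2 htc)]
  · -- 0 < q < 1 : Bernoulli with exponent q + 1
    push_neg at h1 h2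
    have hb : 1 + (q + 1) * (t - 1) ≤ t ^ q * t := by
      have h := one_add_mul_self_le_rpow_one_add (s := t - 1) (by linarith)
        (by linarith : (1:ℝ) ≤ q + 1)
      have : (1 + (t - 1)) ^ (q + 1) = t ^ q * t := by
        rw [show 1 + (t - 1) = t by ring, Real.rpow_add ht0, Real.rpow_one]
      linarith [h.trans_eq this]
    have hc1 : 1 ≤ c := le_trans ht1 htc
    have htq1 : 1 ≤ t ^ q := Real.one_le_rpow ht1 hq.le
    rw [ht2, div_mul_eq_mul_div, le_div_iff₀ (by positivity)]
    have hcu : q * (t - 1) ≤ c * (t ^ q - 1) := by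
      nlinarith [mul_nonneg (sub_nonneg.2 htq1) (sub_nonneg.2 htc)]
    have hstep : q * (q + 1) * (t ^ 2 - 1) ≤ 2 * (c + 1) * (q * (t - 1)) := by
      nlinarith [mul_nonneg (mul_nonneg hq.le (sub_nonneg.2 ht1)) (sub_nonneg.2 htc),
        mul_nonneg (mul_nonneg hq.le (sub_nonneg.2 ht1)) (by linarith : (0:ℝ) ≤ 1 - q),
        mul_nonneg (mul_nonneg (mul_nonneg hq.le (sub_nonneg.2 ht1))
          (by linarith : (0:ℝ) ≤ 1 - q)) (by linarith : (0:ℝ) ≤ t + 1)]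
    have hstep2 : 2 * (c + 1) * (q * (t - 1)) ≤ 2 * (c + 1) * (c * (t ^ q - 1)) :=
      mul_le_mul_of_nonneg_left hcu (by linarith)
    nlinarith [hstep, hstep2]

/-- Comparison between the penalty functions `ζ_q(X) = ‖XV‖_F^q − 1`:
`ζ_2(X) ≤ c_q ζ_q(X)` with explicit constant `c_q` depending on `q`. -/
theorem stmt_12 (n k r : ℕ) (X : Matrix (Fin n) (Fin k) ℝ) (V : Matrix (Fin k) (Fin r) ℝ)
    (hcol : ∀ j, ∑ i, (X i j) ^ 2 = 1) (hnonneg : ∀ i j, 0 ≤ X i j)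
    (hV : Real.sqrt (∑ i, ∑ j, (V i j) ^ 2) = 1)
    (hVV : ∀ i j : Fin k, 0 < (V * Vᵀ) i j)
    (q : ℝ) (hq : 0 < q) :
    Real.sqrt (∑ i, ∑ j, ((X * V) i j) ^ 2) ^ (2 : ℝ) - 1 ≤
      (if 2 ≤ q then (1 : ℝ)
        else if 1 ≤ q then (Real.sqrt k + 1) / q
        else 2 * Real.sqrt k * (Real.sqrt k + 1) / (q * (q + 1))) *
      (Real.sqrt (∑ i, ∑ j, ((X * V) i j) ^ 2) ^ q - 1) := by
  have hVsum : ∑ i, ∑ j, (V i j) ^ 2 = 1 := by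
    have h0 : (0:ℝ) ≤ ∑ i, ∑ j, (V i j) ^ 2 := by positivity
    have h := Real.sq_sqrt h0
    rw [hV] at h; simpa using h.symm
  have key : ∑ i, ∑ j, ((X * V) i j) ^ 2
      = ∑ a, ∑ b, (∑ i, X i a * X i b) * (∑ j, V a j * V b j) := by
    calc ∑ i, ∑ j, ((X * V) i j) ^ 2
        = ∑ i, ∑ j, ∑ a, ∑ b, (X i a * X i b) * (V a j * V b j) := by
          refine Finset.sum_congr rfl fun i _ => Finset.sum_congr rfl fun j _ => ?_
          rw [Matrix.mul_apply, sq, Finset.sum_mul_sum]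
          exact Finset.sum_congr rfl fun a _ => Finset.sum_congr rfl fun b _ => by ring
      _ = ∑ a, ∑ b, ∑ i, ∑ j, (X i a * X i b) * (V a j * V b j) := swap4_stmt12 _
      _ = ∑ a, ∑ b, (∑ i, X i a * X i b) * (∑ j, V a j * V b j) := by
          refine Finset.sum_congr rfl fun a _ => Finset.sum_congr rfl fun b _ => ?_
          rw [Finset.sum_mul_sum]
  have hlow : 1 ≤ ∑ i, ∑ j, ((X * V) i j) ^ 2 := by
    have h1 : (1:ℝ) = ∑ a, (∑ i, X i a * X i a) * (∑ j, V a j * V a j) := by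
      rw [← hVsum]
      refine Finset.sum_congr rfl fun a _ => ?_
      have hXa : (∑ i, X i a * X i a) = 1 := by
        rw [← hcol a]; exact Finset.sum_congr rfl fun i _ => by ring
      rw [hXa, one_mul]
      exact Finset.sum_congr rfl fun j _ => by ring
    rw [key, h1]
    refine Finset.sum_le_sum fun a _ => ?_
    refine Finset.single_le_sum
      (f := fun b => (∑ i, X i a * X i b) * (∑ j, V a j * V b j))
      (fun b _ => ?_) (Finset.mem_univ a)
    refine mul_nonneg
      (Finset.sum_nonneg fun i _ => mul_nonneg (hnonneg i a) (hnonneg i b)) ?_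
    have := (hVV a b).le
    simpa [Matrix.mul_apply, Matrix.transpose_apply] using this
  have hup : ∑ i, ∑ j, ((X * V) i j) ^ 2 ≤ (k:ℝ) := by
    calc ∑ i, ∑ j, ((X * V) i j) ^ 2
        ≤ ∑ i, ∑ j, (∑ l, X i l ^ 2) * (∑ l, (V l j) ^ 2) := by
          refine Finset.sum_le_sum fun i _ => Finset.sum_le_sum fun j _ => ?_
          rw [Matrix.mul_apply]
          exact sum_mul_sq_le_sq_mul_sq _ _ _
      _ = (∑ i, ∑ l, X i l ^ 2) * (∑ j, ∑ l, (V l j) ^ 2) :=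
          (Finset.sum_mul_sum univ univ (fun i => ∑ l, X i l ^ 2) (fun j => ∑ l, (V l j) ^ 2)).symm
      _ = (k:ℝ) * 1 := by
          rw [Finset.sum_comm, Finset.sum_comm (s := (univ : Finset (Fin r)))]
          simp [hcol, hVsum]
      _ = (k:ℝ) := mul_one _
  have ht1 : 1 ≤ Real.sqrt (∑ i, ∑ j, ((X * V) i j) ^ 2) := by
    rw [show (1:ℝ) = Real.sqrt 1 by simp]
    exact Real.sqrt_le_sqrt hlow
  have htc : Real.sqrt (∑ i, ∑ j, ((X * V) i j) ^ 2) ≤ Real.sqrt k :=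
    Real.sqrt_le_sqrt hup
  exact aux_scalar_stmt12 _ _ q hq ht1 htc
end

section
/- Let X* ∈ ℝ^{n×k} satisfy (X*)^T X* = I_k and X* ≥ 0, and let L ∈ ℝ^{k×k} have positive diagonal entries with L_{ii} L_{jj} > max{L_{ij}, L_{ji}, 0}^2 for all i ≠ j. Set C = X* L^T. Then for every Y ∈ ℝ^{n×k} with Y^T Y = I_k, Y ≥ 0, and Y ≠ X*, one has ⟨C, Y⟩ < ⟨C, X*⟩ = ∑_i L_{ii}. Consequently X* is the unique minimizer of ‖X − C‖_F^2 over {X : X^T X = I_k, X ≥ 0}. -/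
open Matrix Finset



lemma aux_key (p q m x y : ℝ) (hp : 0 < p) (hm : m^2 < p*q) (hx : 0 < x) (hy : 0 < y) :
    m*x*y < (p*x^2+q*y^2)/2 := by
  nlinarith [sq_nonneg (p*x - m*y), mul_pos (mul_pos hy hy) (sub_pos.mpr hm)]

lemma row_bound {k : ℕ} (L : Matrix (Fin k) (Fin k) ℝ)
    (hLdiag : ∀ i, 0 < L i i)
    (hL : ∀ i j : Fin k, i ≠ j → (max (max (L i j) (L j i)) 0) ^ 2 < L i i * L j j)
    (x y : Fin k → ℝ) (hx : ∀ a, 0 ≤ x a) (hy : ∀ a, 0 ≤ y a)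
    (hxd : ∀ a b, a ≠ b → x a * x b = 0) (hyd : ∀ a b, a ≠ b → y a * y b = 0) :
    (∑ j, ∑ a, L j a * x a * y j) ≤ (∑ a, L a a * (x a)^2 + ∑ j, L j j * (y j)^2)/2
      ∧ (x ≠ y → (∑ j, ∑ a, L j a * x a * y j)
          < (∑ a, L a a * (x a)^2 + ∑ j, L j j * (y j)^2)/2) := by
  have hRx : (0:ℝ) ≤ ∑ a, L a a * (x a)^2 :=
    Finset.sum_nonneg fun a _ => mul_nonneg (hLdiag a).le (sq_nonneg _)
  have hRy : (0:ℝ) ≤ ∑ j, L j j * (y j)^2 :=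
    Finset.sum_nonneg fun a _ => mul_nonneg (hLdiag a).le (sq_nonneg _)
  by_cases hx0 : ∀ a, x a = 0
  · have hLHS : (∑ j, ∑ a, L j a * x a * y j) = 0 := by
      apply Finset.sum_eq_zero; intro j _; apply Finset.sum_eq_zero; intro a _
      rw [hx0 a]; ring
    constructor
    · rw [hLHS]; linarith
    · intro hne
      have : ∃ j, y j ≠ 0 := by
        by_contra hc; push_neg at hc
        exact hne (funext fun a => by rw [hx0 a, hc a])
      obtain ⟨j0, hj0⟩ := this
      have hyj0 : 0 < y j0 := lt_of_le_of_ne (hy j0) (Ne.symm hj0)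
      have key : L j0 j0 * (y j0)^2 ≤ ∑ j, L j j * (y j)^2 :=
        Finset.single_le_sum (fun a _ => mul_nonneg (hLdiag a).le (sq_nonneg _))
          (Finset.mem_univ j0)
      have : 0 < L j0 j0 * (y j0)^2 := mul_pos (hLdiag j0) (by positivity)
      rw [hLHS]; linarith
  · push_neg at hx0
    obtain ⟨a0, ha0⟩ := hx0
    have hxa0 : 0 < x a0 := lt_of_le_of_ne (hx a0) (Ne.symm ha0)
    have hxz : ∀ a, a ≠ a0 → x a = 0 := by
      intro a haa
      have := hxd a a0 haa
      rcases mul_eq_zero.mp this with h | h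
      · exact h
      · exact absurd h ha0
    have hxsum : ∑ a, L a a * (x a)^2 = L a0 a0 * (x a0)^2 := by
      rw [Finset.sum_eq_single a0]
      · intro b _ hb; rw [hxz b hb]; ring
      · simp
    by_cases hy0 : ∀ j, y j = 0
    · have hLHS : (∑ j, ∑ a, L j a * x a * y j) = 0 := by
        apply Finset.sum_eq_zero; intro j _; apply Finset.sum_eq_zero; intro a _
        rw [hy0 j]; ring
      have : 0 < L a0 a0 * (x a0)^2 := mul_pos (hLdiag a0) (by positivity)
      constructor
      · rw [hLHS, hxsum]; linarith
      · intro _; rw [hLHS, hxsum]; linarith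
    · push_neg at hy0
      obtain ⟨j0, hj0⟩ := hy0
      have hyj0 : 0 < y j0 := lt_of_le_of_ne (hy j0) (Ne.symm hj0)
      have hyz : ∀ j, j ≠ j0 → y j = 0 := by
        intro j hjj
        rcases mul_eq_zero.mp (hyd j j0 hjj) with h | h
        · exact h
        · exact absurd h hj0
      have hysum : ∑ j, L j j * (y j)^2 = L j0 j0 * (y j0)^2 := by
        rw [Finset.sum_eq_single j0]
        · intro b _ hb; rw [hyz b hb]; ring
        · simp
      have hLHS : (∑ j, ∑ a, L j a * x a * y j) = L j0 a0 * x a0 * y j0 := by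
        rw [Finset.sum_eq_single j0]
        · rw [Finset.sum_eq_single a0]
          · intro b _ hb; rw [hxz b hb]; ring
          · simp
        · intro b _ hb; apply Finset.sum_eq_zero; intro a _; rw [hyz b hb]; ring
        · simp
      rw [hLHS, hxsum, hysum]
      by_cases hja : j0 = a0
      · subst hja
        constructor
        · nlinarith [sq_nonneg (x j0 - y j0), hLdiag j0]
        · intro hne
          have hxy : x j0 ≠ y j0 := by
            intro hc
            apply hne
            funext a
            by_cases ha : a = j0
            · rw [ha, hc]
            · rw [hxz a ha, hyz a ha]
          have hne0 : x j0 - y j0 ≠ 0 := sub_ne_zero.mpr hxy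
          have : 0 < (x j0 - y j0)^2 :=
            lt_of_le_of_ne (sq_nonneg _) (Ne.symm (pow_ne_zero 2 hne0))
          nlinarith [hLdiag j0]
      · have hm := hL j0 a0 hja
        have hmx : L j0 a0 ≤ max (max (L j0 a0) (L a0 j0)) 0 :=
          le_trans (le_max_left _ _) (le_max_left _ _)
        have hkey : (max (max (L j0 a0) (L a0 j0)) 0) * x a0 * y j0
            < (L a0 a0 * (x a0)^2 + L j0 j0 * (y j0)^2)/2 := by
          apply aux_key _ _ _ _ _ (hLdiag a0) (by nlinarith) hxa0 hyj0
        have hle : L j0 a0 * x a0 * y j0 ≤ (max (max (L j0 a0) (L a0 j0)) 0) * x a0 * y j0 := by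
          have := mul_pos hxa0 hyj0
          nlinarith
        constructor
        · linarith
        · intro _; linarith

lemma disj {n k : ℕ} (X : Matrix (Fin n) (Fin k) ℝ) (hX : Xᵀ * X = 1)
    (hnn : ∀ i j, 0 ≤ X i j) : ∀ i a b, a ≠ b → X i a * X i b = 0 := by
  intro i a b hab
  have h0 : ∑ i, X i a * X i b = 0 := by
    have := congrFun (congrFun hX a) b
    simp [Matrix.mul_apply, Matrix.one_apply, hab] at this
    simpa [Matrix.transpose_apply] using this
  exact (Finset.sum_eq_zero_iff_of_nonneg
    (fun i _ => mul_nonneg (hnn i a) (hnn i b))).mp h0 i (Finset.mem_univ i)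

lemma colnorm {n k : ℕ} (X : Matrix (Fin n) (Fin k) ℝ) (hX : Xᵀ * X = 1) :
    ∀ a, ∑ i, (X i a)^2 = 1 := by
  intro a
  have := congrFun (congrFun hX a) a
  simp [Matrix.mul_apply, Matrix.one_apply] at this
  simpa [sq] using this

/-- Construction of projection problems onto `S^{n,k}_+` with unique known solution:
with `C = X* Lᵀ` for suitable `L`, every feasible `Y ≠ X*` has strictly smaller
inner product with `C`, `⟨C, X*⟩ = ∑ᵢ Lᵢᵢ`, and `X*` is the unique minimizer of
`‖X − C‖_F²` over the nonnegative Stiefel manifold. -/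
theorem stmt_14 (n k : ℕ) (Xs : Matrix (Fin n) (Fin k) ℝ) (L : Matrix (Fin k) (Fin k) ℝ)
    (hXs : Xsᵀ * Xs = 1) (hXsnn : ∀ i j, 0 ≤ Xs i j)
    (hLdiag : ∀ i, 0 < L i i)
    (hL : ∀ i j : Fin k, i ≠ j → (max (max (L i j) (L j i)) 0) ^ 2 < L i i * L j j) :
    (∀ Y : Matrix (Fin n) (Fin k) ℝ, Yᵀ * Y = 1 → (∀ i j, 0 ≤ Y i j) → Y ≠ Xs →
        ∑ i, ∑ j, (Xs * Lᵀ) i j * Y i j < ∑ i, ∑ j, (Xs * Lᵀ) i j * Xs i j) ∧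
      (∑ i, ∑ j, (Xs * Lᵀ) i j * Xs i j = ∑ i, L i i) ∧
      (∀ Y : Matrix (Fin n) (Fin k) ℝ, Yᵀ * Y = 1 → (∀ i j, 0 ≤ Y i j) → Y ≠ Xs →
        ∑ i, ∑ j, ((Xs - Xs * Lᵀ) i j) ^ 2 < ∑ i, ∑ j, ((Y - Xs * Lᵀ) i j) ^ 2) := by
  -- part 2 : value at Xs
  have h2 : ∑ i, ∑ j, (Xs * Lᵀ) i j * Xs i j = ∑ i, L i i := by
    have e : ∑ i, ∑ j, (Xs * Lᵀ) i j * Xs i j = Matrix.trace ((Xs * Lᵀ)ᵀ * Xs) := by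
      rw [Finset.sum_comm]
      simp only [Matrix.trace, Matrix.diag, Matrix.mul_apply, Matrix.transpose_apply]
    rw [e, Matrix.transpose_mul, Matrix.transpose_transpose, Matrix.mul_assoc, hXs,
      Matrix.mul_one, Matrix.trace]
    rfl
  -- main strict inequality against ∑ L i i
  have key : ∀ Y : Matrix (Fin n) (Fin k) ℝ, Yᵀ * Y = 1 → (∀ i j, 0 ≤ Y i j) → Y ≠ Xs →
      ∑ i, ∑ j, (Xs * Lᵀ) i j * Y i j < ∑ i, L i i := by
    intro Y hY hYnn hne
    have hrw : ∀ i, ∑ j, (Xs * Lᵀ) i j * Y i j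
        = ∑ j, ∑ a, L j a * Xs i a * Y i j := by
      intro i
      refine Finset.sum_congr rfl fun j _ => ?_
      rw [Matrix.mul_apply, Finset.sum_mul]
      exact Finset.sum_congr rfl fun a _ => by simp only [Matrix.transpose_apply]; ring
    have hrow := fun i => row_bound L hLdiag hL (fun a => Xs i a) (fun j => Y i j)
      (fun a => hXsnn i a) (fun j => hYnn i j)
      (fun a b hab => disj Xs hXs hXsnn i a b hab)
      (fun a b hab => disj Y hY hYnn i a b hab)
    have hex : ∃ i0, (fun a => Xs i0 a) ≠ (fun a => Y i0 a) := by
      by_contra hc; push_neg at hc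
      exact hne (by funext i j; exact (congrFun (hc i) j).symm)
    obtain ⟨i0, hi0⟩ := hex
    have hlt : ∑ i, ∑ j, (Xs * Lᵀ) i j * Y i j
        < ∑ i, (∑ a, L a a * (Xs i a)^2 + ∑ j, L j j * (Y i j)^2)/2 := by
      calc ∑ i, ∑ j, (Xs * Lᵀ) i j * Y i j
          = ∑ i, ∑ j, ∑ a, L j a * Xs i a * Y i j :=
            Finset.sum_congr rfl fun i _ => hrw i
        _ < _ := by
            apply Finset.sum_lt_sum (fun i _ => (hrow i).1)
            exact ⟨i0, Finset.mem_univ i0, (hrow i0).2 hi0⟩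
    have hA : ∑ i, ∑ a, L a a * (Xs i a)^2 = ∑ a, L a a := by
      rw [Finset.sum_comm]
      refine Finset.sum_congr rfl fun a _ => ?_
      rw [← Finset.mul_sum, colnorm Xs hXs a, mul_one]
    have hB : ∑ i, ∑ a, L a a * (Y i a)^2 = ∑ a, L a a := by
      rw [Finset.sum_comm]
      refine Finset.sum_congr rfl fun a _ => ?_
      rw [← Finset.mul_sum, colnorm Y hY a, mul_one]
    have hsum : ∑ i, (∑ a, L a a * (Xs i a)^2 + ∑ j, L j j * (Y i j)^2)/2
        = ∑ a, L a a := by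
      rw [← Finset.sum_div, Finset.sum_add_distrib, hA, hB]
      ring
    rw [hsum] at hlt
    exact hlt
  refine ⟨fun Y hY hYnn hne => by rw [h2]; exact key Y hY hYnn hne, h2, ?_⟩
  -- part 3 : Frobenius distance
  intro Y hY hYnn hne
  have expand : ∀ A : Matrix (Fin n) (Fin k) ℝ,
      ∑ i, ∑ j, ((A - Xs * Lᵀ) i j)^2
        = (∑ i, ∑ j, (A i j)^2) - 2*(∑ i, ∑ j, (Xs * Lᵀ) i j * A i j)
          + ∑ i, ∑ j, ((Xs * Lᵀ) i j)^2 := by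
    intro A
    have h1 : ∀ i, ∑ j, ((A - Xs * Lᵀ) i j)^2
        = (∑ j, (A i j)^2) - 2*(∑ j, (Xs * Lᵀ) i j * A i j) + ∑ j, ((Xs * Lᵀ) i j)^2 := by
      intro i
      rw [Finset.mul_sum, ← Finset.sum_sub_distrib, ← Finset.sum_add_distrib]
      exact Finset.sum_congr rfl fun j _ => by simp [Matrix.sub_apply]; ring
    rw [Finset.sum_congr rfl fun i _ => h1 i, Finset.mul_sum, ← Finset.sum_sub_distrib,
      ← Finset.sum_add_distrib]
  have hYsq : ∑ i, ∑ j, (Y i j)^2 = (k:ℝ) := by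
    rw [Finset.sum_comm]
    rw [Finset.sum_congr rfl fun j _ => colnorm Y hY j]
    simp
  have hXsq : ∑ i, ∑ j, (Xs i j)^2 = (k:ℝ) := by
    rw [Finset.sum_comm]
    rw [Finset.sum_congr rfl fun j _ => colnorm Xs hXs j]
    simp
  have hk := key Y hY hYnn hne
  have e1 := expand Y
  have e2 := expand Xs
  rw [hYsq] at e1
  rw [hXsq, h2] at e2
  rw [e1, e2]
  linarith
end

section
/- Let X ∈ ℝ^{n×k} satisfy X^T X = I_k and X ≥ 0. Suppose D ∈ ℝ^{n×k} is a tangent direction to the set S^{n,k}_+ = {X : X^T X = I_k, X ≥ 0} at X, i.e., there exist sequences α_l > 0 with α_l → 0 and D_l → D such that X + α_l D_l ∈ S^{n,k}_+ for all l. Then for every row index i ∈ [n] with X_{i,:} = 0, the row D_{i,:} has at most one nonzero entry, and that entry (if any) is nonnegative. -/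
open Matrix Filter Topology

/-- A tangent direction `D` to `S^{n,k}_+` at a point `X` with a zero row `i` has at most
one nonzero entry in row `i`, and all entries of that row of `D` are nonnegative. -/
theorem stmt_15 (n k : ℕ) (X D : Matrix (Fin n) (Fin k) ℝ)
    (hX : Xᵀ * X = 1) (hXnn : ∀ i j, 0 ≤ X i j)
    (α : ℕ → ℝ) (Dseq : ℕ → Matrix (Fin n) (Fin k) ℝ)
    (hαpos : ∀ l, 0 < α l) (hα : Tendsto α atTop (𝓝 0))
    (hD : Tendsto Dseq atTop (𝓝 D))
    (hfeas : ∀ l, (X + α l • Dseq l)ᵀ * (X + α l • Dseq l) = 1 ∧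
      ∀ i j, 0 ≤ (X + α l • Dseq l) i j) :
    ∀ i : Fin n, (∀ j, X i j = 0) →
      (∀ j, 0 ≤ D i j) ∧ ∀ j₁ j₂ : Fin k, j₁ ≠ j₂ → D i j₁ * D i j₂ = 0 := by
  intro i hXi
  have hent : ∀ (i : Fin n) (j : Fin k),
      Tendsto (fun l => Dseq l i j) atTop (𝓝 (D i j)) := fun i j =>
    tendsto_pi_nhds.mp (tendsto_pi_nhds.mp hD i) j
  have hDseqnn : ∀ l j, 0 ≤ Dseq l i j := by
    intro l j
    have h := (hfeas l).2 i j
    simp only [Matrix.add_apply, Matrix.smul_apply, smul_eq_mul, hXi j, zero_add] at h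
    have hp := hαpos l
    by_contra hc
    push_neg at hc
    nlinarith
  constructor
  · intro j
    exact ge_of_tendsto' (hent i j) fun l => hDseqnn l j
  · intro j₁ j₂ hne
    have hzero : ∀ l, Dseq l i j₁ * Dseq l i j₂ = 0 := by
      intro l
      have h1 := (hfeas l).1
      have h2 := congrFun (congrFun h1 j₁) j₂
      rw [Matrix.mul_apply, Matrix.one_apply_ne hne] at h2
      have hterm : ∀ i' ∈ Finset.univ,
          0 ≤ (X + α l • Dseq l)ᵀ j₁ i' * (X + α l • Dseq l) i' j₂ := fun i' _ =>
        mul_nonneg ((hfeas l).2 i' j₁) ((hfeas l).2 i' j₂)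
      have hi := (Finset.sum_eq_zero_iff_of_nonneg hterm).mp h2 i (Finset.mem_univ i)
      simp only [Matrix.transpose_apply, Matrix.add_apply, Matrix.smul_apply, smul_eq_mul,
        hXi, zero_add] at hi
      have h3 : α l * α l * (Dseq l i j₁ * Dseq l i j₂) = 0 := by rw [← hi]; ring
      have hα2 : α l * α l ≠ 0 := (mul_pos (hαpos l) (hαpos l)).ne'
      exact (mul_eq_zero.mp h3).resolve_left hα2
    have hlim := (hent i j₁).mul (hent i j₂)
    rw [show (fun l => Dseq l i j₁ * Dseq l i j₂) = fun _ => (0 : ℝ) from funext hzero] at hlim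
    exact tendsto_nhds_unique hlim tendsto_const_nhds
end

section
/- Let X ∈ ℝ^{n×k} satisfy X^T X = I_k and X ≥ 0, and let D ∈ ℝ^{n×k} satisfy: X^T D + D^T X = 0, and D_{ij} ≥ 0 whenever X_{ij} = 0. Then x_l^T d_j = 0 for all l, j ∈ [k] (where x_l, d_j denote columns of X, D); in particular D_{ij} = 0 for every (i,j) with X_{ij} = 0 but X_{i,:} ≠ 0. -/
open Matrix Finset

/-- The linearized cone of `{XᵀX = I, X ≥ 0}`: if `XᵀD + DᵀX = 0` and `D ≥ 0` on the
zero pattern of `X`, then `x_lᵀ d_j = 0` for all `l, j`; in particular `D_{ij} = 0`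
whenever `X_{ij} = 0` but row `i` of `X` is nonzero. -/
theorem stmt_16 (n k : ℕ) (X D : Matrix (Fin n) (Fin k) ℝ)
    (hX : Xᵀ * X = 1) (hXnn : ∀ i j, 0 ≤ X i j)
    (hD1 : Xᵀ * D + Dᵀ * X = 0)
    (hD2 : ∀ i j, X i j = 0 → 0 ≤ D i j) :
    (∀ l j : Fin k, ∑ i, X i l * D i j = 0) ∧
      ∀ i j, X i j = 0 → (∃ j', X i j' ≠ 0) → D i j = 0 := by
  -- disjoint supports of distinct columns
  have hdisj : ∀ l j : Fin k, l ≠ j → ∀ i, X i l * X i j = 0 := by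
    intro l j hlj i
    have hsum : ∑ i, X i l * X i j = 0 := by
      have := congrFun (congrFun hX l) j
      simpa [Matrix.mul_apply, Matrix.one_apply, Matrix.transpose_apply, hlj] using this
    have hnn : ∀ i ∈ Finset.univ, 0 ≤ X i l * X i j := fun i _ =>
      mul_nonneg (hXnn i l) (hXnn i j)
    exact (Finset.sum_eq_zero_iff_of_nonneg hnn).mp hsum i (Finset.mem_univ i)
  -- each term X i l * D i j is nonnegative when l ≠ j
  have hterm : ∀ l j : Fin k, l ≠ j → ∀ i, 0 ≤ X i l * D i j := by
    intro l j hlj i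
    by_cases h : X i l = 0
    · simp [h]
    · have hXij : X i j = 0 := by
        have := hdisj l j hlj i
        rcases mul_eq_zero.mp this with h' | h'
        · exact absurd h' h
        · exact h'
      exact mul_nonneg (hXnn i l) (hD2 i j hXij)
  -- sums from hD1
  have hsum2 : ∀ l j : Fin k,
      (∑ i, X i l * D i j) + ∑ i, D i l * X i j = 0 := by
    intro l j
    have := congrFun (congrFun hD1 l) j
    simpa [Matrix.mul_apply, Matrix.transpose_apply, Matrix.add_apply] using this
  have hmain : ∀ l j : Fin k, ∑ i, X i l * D i j = 0 := by
    intro l j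
    by_cases hlj : l = j
    · subst hlj
      have := hsum2 l l
      have h2 : (∑ i, X i l * D i l) + ∑ i, X i l * D i l = 0 := by
        have : ∑ i, D i l * X i l = ∑ i, X i l * D i l :=
          Finset.sum_congr rfl fun i _ => mul_comm _ _
        linarith [hsum2 l l, this ▸ hsum2 l l]
      linarith
    · have hA : 0 ≤ ∑ i, X i l * D i j :=
        Finset.sum_nonneg fun i _ => hterm l j hlj i
      have hB : 0 ≤ ∑ i, D i l * X i j := by
        apply Finset.sum_nonneg
        intro i _
        have := hterm j l (Ne.symm hlj) i
        linarith [this, mul_comm (D i l) (X i j)]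
      linarith [hsum2 l j]
  refine ⟨hmain, ?_⟩
  intro i j hXij ⟨j', hj'⟩
  have hjj' : j' ≠ j := fun h => hj' (h ▸ hXij)
  have hsum0 : ∑ i', X i' j' * D i' j = 0 := hmain j' j
  have hnn : ∀ i' ∈ Finset.univ, 0 ≤ X i' j' * D i' j := fun i' _ => hterm j' j hjj' i'
  have h0 : X i j' * D i j = 0 :=
    (Finset.sum_eq_zero_iff_of_nonneg hnn).mp hsum0 i (Finset.mem_univ i)
  rcases mul_eq_zero.mp h0 with h | h
  · exact absurd h hj'
  · exact h
end

section
/- Let A ∈ ℝ^{n×r} be nonnegative. If (X̄, Ȳ) with X̄^T X̄ = I_k, X̄ ≥ 0, Ȳ ∈ ℝ^{r×k}, Ȳ ≥ 0 is a global minimizer of ‖A − X Y^T‖_F^2 over {X : X^T X = I_k, X ≥ 0} × {Y ≥ 0}, then Ȳ = A^T X̄ and ‖A − X̄ Ȳ^T‖_F^2 = ‖A − X̄ X̄^T A‖_F^2; consequently the ONMF problem min ‖A − X Y^T‖_F^2 and the projective problem min_X ‖A − X X^T A‖_F^2 have the same optimal value. -/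
open Matrix Finset

lemma sumsq_eq_trace {m p : ℕ} (M : Matrix (Fin m) (Fin p) ℝ) :
    ∑ i, ∑ j, (M i j) ^ 2 = Matrix.trace (Mᵀ * M) := by
  simp only [Matrix.trace, Matrix.diag, Matrix.mul_apply, Matrix.transpose_apply, sq]
  rw [Finset.sum_comm]

lemma key {n r k : ℕ} (A : Matrix (Fin n) (Fin r) ℝ)
    (X : Matrix (Fin n) (Fin k) ℝ) (Y : Matrix (Fin r) (Fin k) ℝ)
    (hX : Xᵀ * X = 1) :
    ∑ i, ∑ j, ((A - X * Yᵀ) i j) ^ 2 =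
      ∑ i, ∑ j, ((A - X * Xᵀ * A) i j) ^ 2 + ∑ i, ∑ j, ((Y - Aᵀ * X) i j) ^ 2 := by
  rw [sumsq_eq_trace, sumsq_eq_trace, sumsq_eq_trace]
  have hXX : ∀ {m : ℕ} (M : Matrix (Fin k) (Fin m) ℝ), Xᵀ * (X * M) = M := by
    intro m M; rw [← Matrix.mul_assoc, hX, Matrix.one_mul]
  simp only [Matrix.transpose_sub, Matrix.transpose_mul, Matrix.transpose_transpose,
    Matrix.sub_mul, Matrix.mul_sub, Matrix.trace_sub, Matrix.mul_assoc, hXX]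
  have t1 : Matrix.trace (Aᵀ * (X * Yᵀ)) = Matrix.trace (Yᵀ * (Aᵀ * X)) := by
    rw [Matrix.trace_mul_comm Aᵀ (X * Yᵀ), Matrix.mul_assoc, Matrix.trace_mul_comm,
      Matrix.mul_assoc]
  have t2 : Matrix.trace (Y * (Xᵀ * A)) = Matrix.trace (Xᵀ * (A * Y)) := by
    rw [Matrix.trace_mul_comm, Matrix.mul_assoc]
  have t3 : Matrix.trace (Aᵀ * (X * (Xᵀ * A))) = Matrix.trace (Xᵀ * (A * (Aᵀ * X))) := by
    rw [Matrix.trace_mul_comm, Matrix.mul_assoc, Matrix.trace_mul_comm,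
      Matrix.mul_assoc, Matrix.mul_assoc]
  have t4 : Matrix.trace (Y * Yᵀ) = Matrix.trace (Yᵀ * Y) := Matrix.trace_mul_comm _ _
  linarith [t1, t2, t3, t4]

/-- ONMF and its projective variant: a global minimizer `(X̄, Ȳ)` of
`‖A − XYᵀ‖_F²` over the nonnegative Stiefel manifold times the nonnegative orthant
satisfies `Ȳ = Aᵀ X̄`, its objective value equals `‖A − X̄ X̄ᵀ A‖_F²`, and `X̄`
globally minimizes the projective problem, so both problems share the optimal value. -/
theorem stmt_17 (n r k : ℕ) (A : Matrix (Fin n) (Fin r) ℝ)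
    (hA : ∀ i j, 0 ≤ A i j)
    (Xb : Matrix (Fin n) (Fin k) ℝ) (Yb : Matrix (Fin r) (Fin k) ℝ)
    (hXb : Xbᵀ * Xb = 1) (hXbnn : ∀ i j, 0 ≤ Xb i j) (hYbnn : ∀ i j, 0 ≤ Yb i j)
    (hmin : ∀ (X : Matrix (Fin n) (Fin k) ℝ) (Y : Matrix (Fin r) (Fin k) ℝ),
      Xᵀ * X = 1 → (∀ i j, 0 ≤ X i j) → (∀ i j, 0 ≤ Y i j) →
      ∑ i, ∑ j, ((A - Xb * Ybᵀ) i j) ^ 2 ≤ ∑ i, ∑ j, ((A - X * Yᵀ) i j) ^ 2) :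
    Yb = Aᵀ * Xb ∧
      (∑ i, ∑ j, ((A - Xb * Ybᵀ) i j) ^ 2 = ∑ i, ∑ j, ((A - Xb * Xbᵀ * A) i j) ^ 2) ∧
      ∀ X : Matrix (Fin n) (Fin k) ℝ, Xᵀ * X = 1 → (∀ i j, 0 ≤ X i j) →
        ∑ i, ∑ j, ((A - Xb * Xbᵀ * A) i j) ^ 2 ≤ ∑ i, ∑ j, ((A - X * Xᵀ * A) i j) ^ 2 := by
  have hAX : ∀ (X : Matrix (Fin n) (Fin k) ℝ), (∀ i j, 0 ≤ X i j) →
      ∀ i j, 0 ≤ (Aᵀ * X) i j := by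
    intro X hXnn i j
    rw [Matrix.mul_apply]
    exact Finset.sum_nonneg fun t _ => mul_nonneg (hA t i) (hXnn t j)
  -- residual at (Xb, AᵀXb) equals projective objective at Xb
  have hres : ∀ i, ∀ j, (((Aᵀ * Xb) - Aᵀ * Xb) : Matrix (Fin r) (Fin k) ℝ) i j = 0 := by
    simp
  have hkeyb := key A Xb Yb hXb
  have hle := hmin Xb (Aᵀ * Xb) hXb hXbnn (hAX Xb hXbnn)
  have hkey0 := key A Xb (Aᵀ * Xb) hXb
  rw [hkey0] at hle
  simp only [sub_self] at hle
  have hz : ∀ i j, ((Aᵀ * Xb - Aᵀ * Xb : Matrix (Fin r) (Fin k) ℝ)) i j ^ 2 = 0 := by simp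
  have hle' : ∑ i, ∑ j, ((A - Xb * Ybᵀ) i j) ^ 2 ≤ ∑ i, ∑ j, ((A - Xb * Xbᵀ * A) i j) ^ 2 := by
    simpa using hle
  have hnn : 0 ≤ ∑ i, ∑ j, ((Yb - Aᵀ * Xb) i j) ^ 2 :=
    Finset.sum_nonneg fun i _ => Finset.sum_nonneg fun j _ => sq_nonneg _
  have hzero : ∑ i, ∑ j, ((Yb - Aᵀ * Xb) i j) ^ 2 = 0 := by
    nlinarith [hkeyb]
  have hYeq : Yb = Aᵀ * Xb := by
    ext i j
    have h := (Finset.sum_eq_zero_iff_of_nonneg (fun i _ => Finset.sum_nonneg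
      fun j _ => sq_nonneg ((Yb - Aᵀ * Xb) i j))).mp hzero i (Finset.mem_univ i)
    have h2 := (Finset.sum_eq_zero_iff_of_nonneg (fun j _ => sq_nonneg _)).mp h j
      (Finset.mem_univ j)
    have := pow_eq_zero_iff (n := 2) (by norm_num) |>.mp h2
    have : Yb i j - (Aᵀ * Xb) i j = 0 := this
    linarith
  refine ⟨hYeq, ?_, ?_⟩
  · rw [hkeyb, hzero, add_zero]
  · intro X hX hXnn
    have h1 := hmin X (Aᵀ * X) hX hXnn (hAX X hXnn)
    rw [hkeyb, hzero, add_zero, key A X (Aᵀ * X) hX] at h1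
    have hz2 : ∑ i, ∑ j, ((Aᵀ * X - Aᵀ * X : Matrix (Fin r) (Fin k) ℝ) i j) ^ 2 = 0 := by simp
    linarith
end

section
/- Let X̄ ∈ ℝ^{n×k} have columns that are nonnegative unit vectors, and let h : ℝ^{n×k} → ℝ be continuously differentiable. If X̄ is a local minimizer of h over OB^{n,k}_+ = {X : ‖x_j‖ = 1, x_j ≥ 0 for all j}, then the Riemannian gradient grad h(X̄) := ∇h(X̄) − X̄ Diag(X̄^T ∇h(X̄)) satisfies the complementarity conditions 0 ≤ X̄ ⊥ grad h(X̄) ≥ 0, i.e., grad h(X̄) ≥ 0 entrywise, and X̄_{ij} · [grad h(X̄)]_{ij} = 0 for all (i,j). -/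
/-!
For a direction `E` with `X̄ + tE ≥ 0` for small `t > 0`, renormalising the columns of `X̄ + tE`
gives a curve in `OB⁺` whose velocity at `0` is `P(E) = E - X̄ Diag(X̄ᵀE)`. First-order optimality along it gives `⟨∇h(X̄), P(E)⟩ ≥ 0`, and since
`P` is self-adjoint for the Frobenius inner product this reads `⟨grad h(X̄), E⟩ ≥ 0`. The direction
`E = eᵢeⱼᵀ` gives `grad h(X̄)ᵢⱼ ≥ 0`; when `X̄ᵢⱼ > 0` the direction `-eᵢeⱼᵀ` is feasible as well and
forces `grad h(X̄)ᵢⱼ = 0`.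
-/

open Matrix Finset

attribute [local instance] Matrix.frobeniusNormedAddCommGroup Matrix.frobeniusNormedSpace

open Filter Set Topology

theorem HasDerivWithinAt.mem_posTangentConeAt {E : Type*} [NormedAddCommGroup E]
    [NormedSpace ℝ E] {c : ℝ → E} {v : E} {s : Set E} (hc : HasDerivWithinAt c v (Ioi 0) 0)
    (hs : ∀ᶠ t in 𝓝[>] 0, c t ∈ s) : v ∈ posTangentConeAt s (c 0) := by
  refine mem_tangentConeAt_of_seq (𝓝[>] 0) (fun t ↦ t⁻¹.toNNReal) (fun t ↦ c t - c 0)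
    (tendsto_sub_nhds_zero_iff.mpr hc.continuousWithinAt.tendsto) (by simpa using hs) ?_
  refine ((hasDerivWithinAt_iff_tendsto_slope' (lt_irrefl 0)).mp hc).congr' ?_
  filter_upwards [self_mem_nhdsWithin] with t (ht : 0 < t)
  rw [NNReal.smul_def, Real.coe_toNNReal _ (inv_nonneg.mpr ht.le), slope_def_module, sub_zero]

theorem Matrix.hasDerivAt_of_entries {m n : Type*} [Fintype m] [Fintype n]
    {c : ℝ → Matrix m n ℝ} {D : Matrix m n ℝ} {t : ℝ}
    (hc : ∀ a b, HasDerivAt (fun s ↦ c s a b) (D a b) t) : HasDerivAt c D t := by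
  let e := (Matrix.ofLinearEquiv (m := m) (n := n) ℝ (α := ℝ)).toContinuousLinearEquiv
  have hpi : HasDerivAt (fun s ↦ e.symm (c s)) (e.symm D) t :=
    hasDerivAt_pi.mpr fun a ↦ hasDerivAt_pi.mpr fun b ↦ hc a b
  exact e.hasFDerivAt.comp_hasDerivAt t hpi

theorem hasDerivAt_div_sqrt_sum_sq {ι : Type*} [Fintype ι] {u : ι → ℝ} (hu : ∑ l, u l ^ 2 = 1)
    (d : ι → ℝ) (a : ι) :
    HasDerivAt (fun t ↦ (u a + t * d a) / √(∑ l, (u l + t * d l) ^ 2))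
      (d a - u a * ∑ l, u l * d l) 0 := by
  have hline : ∀ l, HasDerivAt (fun t ↦ u l + t * d l) (d l) 0 := fun l ↦ by
    simpa using (hasDerivAt_mul_const (d l)).const_add (u l)
  have hsq : HasDerivAt (fun t ↦ ∑ l, (u l + t * d l) ^ 2) (2 * ∑ l, u l * d l) 0 := by
    refine (HasDerivAt.fun_sum fun l _ ↦ (hline l).fun_pow 2).congr_deriv ?_
    simp [Finset.mul_sum, mul_assoc]
  have hnorm : HasDerivAt (fun t ↦ √(∑ l, (u l + t * d l) ^ 2)) (∑ l, u l * d l) 0 := by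
    refine (hsq.sqrt (by simp [hu])).congr_deriv ?_
    simp [hu]
  refine ((hline a).div hnorm (by simp [hu])).congr_deriv ?_
  simp [hu]

section Oblique

variable {m n : Type*} [Fintype m]

noncomputable def normalizeCols (X : Matrix m n ℝ) : Matrix m n ℝ :=
  Matrix.of fun a b ↦ X a b / √(∑ l, X l b ^ 2)

def nonnegOblique (m n : Type*) [Fintype m] : Set (Matrix m n ℝ) :=
  {X | (∀ b, ∑ a, X a b ^ 2 = 1) ∧ ∀ a b, 0 ≤ X a b}

theorem normalizeCols_mem_nonnegOblique {X : Matrix m n ℝ} (hpos : ∀ b, 0 < ∑ a, X a b ^ 2)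
    (hnn : ∀ a b, 0 ≤ X a b) : normalizeCols X ∈ nonnegOblique m n := by
  refine ⟨fun b ↦ ?_, fun a b ↦ div_nonneg (hnn a b) (Real.sqrt_nonneg _)⟩
  simp only [normalizeCols, of_apply, div_pow, ← Finset.sum_div, Real.sq_sqrt (hpos b).le]
  exact div_self (hpos b).ne'

theorem normalizeCols_of_mem_nonnegOblique {X : Matrix m n ℝ} (hX : X ∈ nonnegOblique m n) :
    normalizeCols X = X := by
  ext a b
  simp [normalizeCols, hX.1 b]

variable [Fintype n] [DecidableEq n]

def obliqueProj (X E : Matrix m n ℝ) : Matrix m n ℝ :=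
  E - X * diagonal fun b ↦ (Xᵀ * E) b b

theorem obliqueProj_apply (X E : Matrix m n ℝ) (a : m) (b : n) :
    obliqueProj X E a b = E a b - X a b * ∑ l, X l b * E l b := by
  rw [obliqueProj, Matrix.sub_apply, mul_diagonal, mul_apply]
  simp only [transpose_apply]

theorem sum_obliqueProj_mul_comm (X E G : Matrix m n ℝ) :
    ∑ a, ∑ b, obliqueProj X E a b * G a b = ∑ a, ∑ b, E a b * obliqueProj X G a b := by
  simp only [obliqueProj_apply, sub_mul, mul_sub, Finset.sum_sub_distrib]
  congr 1
  rw [Finset.sum_comm, eq_comm, Finset.sum_comm]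
  refine Finset.sum_congr rfl fun b _ ↦ ?_
  calc ∑ a, E a b * (X a b * ∑ l, X l b * G l b)
      = (∑ l, X l b * G l b) * ∑ a, X a b * E a b := by
        rw [Finset.mul_sum]; exact Finset.sum_congr rfl fun a _ ↦ by ring
    _ = ∑ a, X a b * (∑ l, X l b * E l b) * G a b := by
        rw [mul_comm, Finset.mul_sum]; exact Finset.sum_congr rfl fun a _ ↦ by ring

theorem hasDerivAt_normalizeCols_add_smul {X : Matrix m n ℝ} (hX : ∀ b, ∑ a, X a b ^ 2 = 1)
    (E : Matrix m n ℝ) : HasDerivAt (fun t : ℝ ↦ normalizeCols (X + t • E)) (obliqueProj X E) 0 :=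
  Matrix.hasDerivAt_of_entries fun a b ↦ by
    simpa [normalizeCols, obliqueProj_apply] using hasDerivAt_div_sqrt_sum_sq (hX b) (E · b) a

theorem fderiv_apply_eq_sum_single [DecidableEq m] (f : Matrix m n ℝ → ℝ) (X M : Matrix m n ℝ) :
    fderiv ℝ f X M = ∑ a, ∑ b, M a b * fderiv ℝ f X (Matrix.single a b 1) := by
  conv_lhs => rw [matrix_eq_sum_single M]
  simp only [map_sum]
  refine Finset.sum_congr rfl fun a _ ↦ Finset.sum_congr rfl fun b _ ↦ ?_
  rw [← smul_eq_mul, ← map_smul, smul_single, smul_eq_mul, mul_one]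

theorem sum_single_mul [DecidableEq m] (i : m) (j : n) (s : ℝ) (M : Matrix m n ℝ) :
    ∑ a, ∑ b, Matrix.single i j s a b * M a b = s * M i j := by
  simp [single_apply, ite_and]

theorem obliqueProj_mem_posTangentConeAt {X E : Matrix m n ℝ} (hX : X ∈ nonnegOblique m n)
    (hE : ∀ᶠ t in 𝓝[>] 0, ∀ a b, 0 ≤ X a b + t * E a b) :
    obliqueProj X E ∈ posTangentConeAt (nonnegOblique m n) X := by
  have hpos : ∀ᶠ t in 𝓝 (0 : ℝ), ∀ b, 0 < ∑ a, (X a b + t * E a b) ^ 2 :=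
    eventually_all.mpr fun b ↦
      (Continuous.tendsto' (by fun_prop) 0 1 (by simp [hX.1 b])).eventually (lt_mem_nhds one_pos)
  have hcurve := (hasDerivAt_normalizeCols_add_smul hX.1 E).hasDerivWithinAt (s := Ioi 0)
  have hcone := hcurve.mem_posTangentConeAt <| by
    filter_upwards [hE, nhdsWithin_le_nhds hpos] with t hEt hpt
    exact normalizeCols_mem_nonnegOblique (by simpa using hpt) (by simpa using hEt)
  rwa [zero_smul, add_zero, normalizeCols_of_mem_nonnegOblique hX] at hcone

end Oblique

theorem eventually_nonneg_add_mul_single {m n : Type*} [DecidableEq m] [DecidableEq n]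
    {X : Matrix m n ℝ} (hX : ∀ a b, 0 ≤ X a b) {i : m} {j : n} {s : ℝ} (hs : 0 ≤ s ∨ 0 < X i j) :
    ∀ᶠ t in 𝓝[>] 0, ∀ a b, 0 ≤ X a b + t * Matrix.single i j s a b := by
  have hij : ∀ᶠ t in 𝓝[>] (0 : ℝ), 0 ≤ X i j + t * s := by
    rcases hs with hs | hs
    · filter_upwards [self_mem_nhdsWithin] with t (ht : 0 < t)
      have := hX i j
      positivity
    · refine nhdsWithin_le_nhds ?_
      have hcont : Continuous fun t : ℝ ↦ X i j + t * s := by fun_prop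
      filter_upwards [(hcont.tendsto' 0 _ (by simp)).eventually (lt_mem_nhds hs)] with t ht
      exact ht.le
  filter_upwards [hij] with t ht a b
  rw [single_apply]
  split_ifs with h
  · obtain ⟨rfl, rfl⟩ := h
    exact ht
  · simpa using hX a b

/-- First-order optimality for minimization over the nonnegative oblique manifold:
at a local minimizer `X̄`, the Riemannian gradient
`grad h(X̄) = ∇h(X̄) − X̄ Diag(X̄ᵀ ∇h(X̄))` satisfies `0 ≤ X̄ ⊥ grad h(X̄) ≥ 0`. -/
theorem stmt_18 (n k : ℕ) (h : Matrix (Fin n) (Fin k) ℝ → ℝ) (hdiff : ContDiff ℝ 1 h)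
    (Xb : Matrix (Fin n) (Fin k) ℝ)
    (hcol : ∀ j, ∑ i, (Xb i j) ^ 2 = 1) (hnn : ∀ i j, 0 ≤ Xb i j)
    (hmin : ∃ ε : ℝ, 0 < ε ∧ ∀ X : Matrix (Fin n) (Fin k) ℝ,
      (∀ j, ∑ i, (X i j) ^ 2 = 1) → (∀ i j, 0 ≤ X i j) → ‖X - Xb‖ < ε → h Xb ≤ h X) :
    let G : Matrix (Fin n) (Fin k) ℝ :=
      fun i j => fderiv ℝ h Xb (Matrix.single i j 1)
    let grad : Matrix (Fin n) (Fin k) ℝ :=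
      G - Xb * Matrix.diagonal (fun j => (Xbᵀ * G) j j)
    ∀ i j, 0 ≤ grad i j ∧ Xb i j * grad i j = 0 := by
  intro G grad i j
  have hlocal : IsLocalMinOn h (nonnegOblique (Fin n) (Fin k)) Xb := by
    obtain ⟨ε, hε, hε_min⟩ := hmin
    filter_upwards [inter_mem_nhdsWithin _ (Metric.ball_mem_nhds Xb hε)] with X ⟨hX, hXε⟩
    exact hε_min X hX.1 hX.2 (by rwa [Metric.mem_ball, dist_eq_norm] at hXε)
  have hfd : HasFDerivAt h (fderiv ℝ h Xb) Xb :=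
    (hdiff.differentiable one_ne_zero).differentiableAt.hasFDerivAt
  have hdir : ∀ s : ℝ, 0 ≤ s ∨ 0 < Xb i j → 0 ≤ s * grad i j := fun s hs ↦ by
    have hval : fderiv ℝ h Xb (obliqueProj Xb (Matrix.single i j s)) = s * grad i j := by
      rw [fderiv_apply_eq_sum_single]
      exact (sum_obliqueProj_mul_comm Xb _ G).trans (sum_single_mul i j s grad)
    exact hval ▸ hlocal.hasFDerivWithinAt_nonneg hfd.hasFDerivWithinAt
      (obliqueProj_mem_posTangentConeAt ⟨hcol, hnn⟩ (eventually_nonneg_add_mul_single hnn hs))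
  have hgrad : 0 ≤ grad i j := by simpa using hdir 1 (Or.inl zero_le_one)
  refine ⟨hgrad, ?_⟩
  rcases (hnn i j).eq_or_lt with hzero | hpos
  · rw [← hzero, zero_mul]
  · have := hdir (-1) (Or.inr hpos)
    rw [le_antisymm (by linarith) hgrad, mul_zero]
end

section
/- Let w_{ji} ≥ 0 for j, i ∈ [k] satisfy ∑_{i∈[k]} w_{ji} ≤ 1 for each j, and let P ∈ ℝ^{k×k} have nonnegative entries with positive diagonal satisfying P_{ji}^2 ≤ P_{ii} P_{jj} for all i, j. Then ∑_{i} (∑_{j} P_{ji}^2 w_{ji})^{1/2} ≤ ∑_{i} P_{ii}. -/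
open Finset

/-- Chained estimate in the uniqueness proof of the projection onto the nonnegative
Stiefel manifold: `∑ᵢ (∑ⱼ Pⱼᵢ² wⱼᵢ)^{1/2} ≤ ∑ᵢ Pᵢᵢ`. -/
theorem stmt_19 (k : ℕ) (w : Fin k → Fin k → ℝ) (P : Matrix (Fin k) (Fin k) ℝ)
    (hw : ∀ j i, 0 ≤ w j i) (hwsum : ∀ j, ∑ i, w j i ≤ 1)
    (hPnn : ∀ j i, 0 ≤ P j i) (hPdiag : ∀ i, 0 < P i i)
    (hP : ∀ i j, (P j i) ^ 2 ≤ P i i * P j j) :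
    ∑ i, Real.sqrt (∑ j, (P j i) ^ 2 * w j i) ≤ ∑ i, P i i := by
  set S := fun i : Fin k => ∑ j, P j j * w j i with hS
  have hSnn : ∀ i, 0 ≤ S i := fun i =>
    Finset.sum_nonneg fun j _ => mul_nonneg (hPdiag j).le (hw j i)
  have step1 : ∀ i, Real.sqrt (∑ j, (P j i) ^ 2 * w j i)
      ≤ Real.sqrt (P i i) * Real.sqrt (S i) := by
    intro i
    rw [← Real.sqrt_mul (hPdiag i).le]
    apply Real.sqrt_le_sqrt
    rw [Finset.mul_sum]
    refine Finset.sum_le_sum fun j _ => ?_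
    rw [← mul_assoc]
    exact mul_le_mul_of_nonneg_right (hP i j) (hw j i)
  have step2 : ∑ i, Real.sqrt (P i i) * Real.sqrt (S i)
      ≤ Real.sqrt (∑ i, P i i) * Real.sqrt (∑ i, S i) := by
    exact Real.sum_sqrt_mul_sqrt_le Finset.univ (fun i => (hPdiag i).le) hSnn
  have step3 : ∑ i, S i ≤ ∑ j, P j j := by
    rw [Finset.sum_comm]
    calc ∑ j, ∑ i, P j j * w j i = ∑ j, P j j * ∑ i, w j i := by
          simp [Finset.mul_sum]
      _ ≤ ∑ j, P j j * 1 :=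
          Finset.sum_le_sum fun j _ =>
            mul_le_mul_of_nonneg_left (hwsum j) (hPdiag j).le
      _ = ∑ j, P j j := by simp
  calc ∑ i, Real.sqrt (∑ j, (P j i) ^ 2 * w j i)
      ≤ ∑ i, Real.sqrt (P i i) * Real.sqrt (S i) :=
        Finset.sum_le_sum fun i _ => step1 i
    _ ≤ Real.sqrt (∑ i, P i i) * Real.sqrt (∑ i, S i) := step2
    _ ≤ Real.sqrt (∑ i, P i i) * Real.sqrt (∑ i, P i i) :=
        mul_le_mul_of_nonneg_left (Real.sqrt_le_sqrt step3) (Real.sqrt_nonneg _)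
    _ = ∑ i, P i i := Real.mul_self_sqrt (Finset.sum_nonneg fun i _ => (hPdiag i).le)
end
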